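/- arXiv:1008.1966 — 5 statements merged into one kernel-verified Lean document; each statement's English description precedes it below -/
import Mathlib

section
/- There is a constant C ≥ 1 such that for every n ≥ 1, every word w in the free group F on {a,s,t} which has length at most n and lies in the normal closure of R_Γ satisfies Area(w) ≤ C·2^(C·n). (The exponential upper bound half of: the Dehn function of Baumslag's group Γ satisfies Area(n) ≃ 2^n.) -/
/-- The three generators of Baumslag's group. -/
inductive Letter : Type
  | a | s | t
  deriving DecidableEq

/-- The free group on `{a, s, t}`. -/
abbrev F : Type := FreeGroup Letter

def a : F := FreeGroup.of Letter.a
def s : F := FreeGroup.of Letter.s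
def t : F := FreeGroup.of Letter.t

/-- The commutator convention `[x, y] = x⁻¹ y⁻¹ x y`. -/
def cmm (x y : F) : F := x⁻¹ * y⁻¹ * x * y

/-- The relator set of Baumslag's presentation
`⟨a,s,t | [a, a^t] = 1, [s,t] = 1, a^s = a·a^t⟩`. -/
def RΓ : Set F :=
  {cmm a (t⁻¹ * a * t), cmm s t, (s⁻¹ * a * s)⁻¹ * a * (t⁻¹ * a * t)}

/-- `w` freely equals a product of `N` conjugates of elements of `R^±1`. -/
def IsConjProd (R : Set F) (N : ℕ) (w : F) : Prop :=
  ∃ (u r : Fin N → F) (ε : Fin N → ℤ),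
    (∀ i, r i ∈ R) ∧ (∀ i, ε i = 1 ∨ ε i = -1) ∧
    w = (List.ofFn fun i => u i * r i ^ ε i * (u i)⁻¹).prod

/-- `Area(w)`: the least `N` such that `w` freely equals a product of `N`
conjugates of relators or their inverses. -/
noncomputable def area (R : Set F) (w : F) : ℕ := sInf {N : ℕ | IsConjProd R N w}

namespace B

/-- an element which is a conjugate of a relator or its inverse -/
def IsConjElt (x : F) : Prop :=
  ∃ (u r : F) (ε : ℤ), r ∈ RΓ ∧ (ε = 1 ∨ ε = -1) ∧ x = u * r ^ ε * u⁻¹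

/-- `w` is a product of at most `k` conjugates of relators -/
def CP (k : ℕ) (w : F) : Prop :=
  ∃ l : List F, l.length ≤ k ∧ (∀ x ∈ l, IsConjElt x) ∧ w = l.prod

lemma CP.mono {k k' : ℕ} {w : F} (h : CP k w) (hk : k ≤ k') : CP k' w := by
  obtain ⟨l, h1, h2, h3⟩ := h; exact ⟨l, h1.trans hk, h2, h3⟩

lemma CP_one : CP 0 (1 : F) := ⟨[], by simp, by simp, by simp⟩

lemma CP.mul {k l : ℕ} {x y : F} (hx : CP k x) (hy : CP l y) : CP (k + l) (x * y) := by
  obtain ⟨lx, h1, h2, h3⟩ := hx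
  obtain ⟨ly, g1, g2, g3⟩ := hy
  refine ⟨lx ++ ly, ?_, ?_, ?_⟩
  · simpa using Nat.add_le_add h1 g1
  · intro z hz; rcases List.mem_append.1 hz with h | h
    exacts [h2 z h, g2 z h]
  · simp [h3, g3]

lemma conj_prod (u : F) (l : List F) :
    (l.map fun x => u * x * u⁻¹).prod = u * l.prod * u⁻¹ := by
  induction l with
  | nil => simp
  | cons y l ih => rw [List.map_cons, List.prod_cons, List.prod_cons, ih]; group

lemma CP.conj {k : ℕ} {x : F} (u : F) (h : CP k x) : CP k (u * x * u⁻¹) := by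
  obtain ⟨l, h1, h2, h3⟩ := h
  refine ⟨l.map fun x => u * x * u⁻¹, by simpa using h1, ?_, ?_⟩
  · intro z hz
    obtain ⟨y, hy, rfl⟩ := List.mem_map.1 hz
    obtain ⟨v, r, ε, hr, hε, rfl⟩ := h2 y hy
    exact ⟨u * v, r, ε, hr, hε, by group⟩
  · rw [conj_prod, h3]

lemma IsConjElt.inv {x : F} (h : IsConjElt x) : IsConjElt x⁻¹ := by
  obtain ⟨u, r, ε, hr, hε, rfl⟩ := h
  exact ⟨u, r, -ε, hr, by omega, by group⟩

lemma CP.inv {k : ℕ} {x : F} (h : CP k x) : CP k x⁻¹ := by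
  obtain ⟨l, h1, h2, h3⟩ := h
  refine ⟨(l.map Inv.inv).reverse, by simpa using h1, ?_, ?_⟩
  · intro z hz
    simp only [List.mem_reverse, List.mem_map] at hz
    obtain ⟨y, hy, rfl⟩ := hz
    exact (h2 y hy).inv
  · rw [h3, List.prod_inv_reverse]

lemma CP_rel {r : F} (hr : r ∈ RΓ) : CP 1 r := by
  refine ⟨[r], by simp, ?_, by simp⟩
  rintro x hx
  simp only [List.mem_singleton] at hx
  subst hx
  exact ⟨1, x, 1, hr, Or.inl rfl, by group⟩

lemma area_le_of_CP {k : ℕ} {w : F} (h : CP k w) : area RΓ w ≤ k := by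
  obtain ⟨l, h1, h2, h3⟩ := h
  have : IsConjProd RΓ l.length w := by
    have hx : ∀ i : Fin l.length, IsConjElt l[(i:ℕ)] :=
      fun i => h2 _ (l.getElem_mem i.isLt)
    choose u r ε hr hε hval using hx
    refine ⟨u, r, ε, hr, hε, ?_⟩
    rw [h3]
    congr 1
    apply List.ext_getElem (by simp)
    intro i hi1 hi2
    rw [List.getElem_ofFn]
    exact hval ⟨i, hi1⟩
  calc area RΓ w ≤ l.length := Nat.sInf_le this
    _ ≤ k := h1

/-- `w` can be transformed to `w'` with at most `k` relator applications. -/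
def St (k : ℕ) (w w' : F) : Prop := CP k (w * w'⁻¹)

lemma St.ofEq {w w' : F} (h : w = w') : St 0 w w' := by
  unfold St; rw [h]; simpa using CP_one

lemma St.refl (w : F) : St 0 w w := St.ofEq rfl

lemma St.mono {k k'} {w w'} (h : St k w w') (hk : k ≤ k') : St k' w w' := CP.mono h hk

lemma St.symm {k} {w w' : F} (h : St k w w') : St k w' w := by
  have := CP.inv h
  unfold St
  simpa [mul_inv_rev] using this

lemma St.trans {k l} {w w' w'' : F} (h : St k w w') (h' : St l w' w'') :
    St (k + l) w w'' := by
  have := CP.mul h h'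
  unfold St
  have e : w * w'⁻¹ * (w' * w''⁻¹) = w * w''⁻¹ := by group
  rwa [e] at this

lemma St.mul {k l} {w₁ w₁' w₂ w₂' : F} (h : St k w₁ w₁') (h' : St l w₂ w₂') :
    St (k + l) (w₁ * w₂) (w₁' * w₂') := by
  have h2 : CP l (w₁' * (w₂ * w₂'⁻¹) * w₁'⁻¹) := CP.conj _ h'
  have := CP.mul h h2
  unfold St
  have e : w₁ * w₁'⁻¹ * (w₁' * (w₂ * w₂'⁻¹) * w₁'⁻¹) = w₁ * w₂ * (w₁' * w₂')⁻¹ := by group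
  rwa [e] at this

lemma St.congr {k} (u v : F) {w w' : F} (h : St k w w') :
    St k (u * w * v) (u * w' * v) := by
  have := ((St.refl u).mul h).mul (St.refl v)
  simpa [mul_assoc] using this

lemma St.inv {k} {w w' : F} (h : St k w w') : St k w⁻¹ w'⁻¹ := by
  have h1 : CP k (w' * w⁻¹) := h.symm
  have h2 : CP k (w⁻¹ * (w' * w⁻¹) * w⁻¹⁻¹) := CP.conj _ h1
  unfold St
  have e : w⁻¹ * (w' * w⁻¹) * w⁻¹⁻¹ = w⁻¹ * w'⁻¹⁻¹ := by group
  rwa [e] at h2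

lemma area_le_of_St {k : ℕ} {w : F} (h : St k w 1) : area RΓ w ≤ k := by
  unfold St at h
  exact area_le_of_CP (by simpa using h)

lemma St_rel {r : F} (hr : r ∈ RΓ) : St 1 r 1 := by
  unfold St; simpa using CP_rel hr

/-! ### Basic words and relator moves -/

lemma St.rweq {k} {w w' x y : F} (h : St k w w') (hx : x = w) (hy : y = w') : St k x y := by
  rw [hx, hy]; exact h

lemma St_one_of (r : F) (hr : r ∈ RΓ) (u : F) (ε : ℤ) (hε : ε = 1 ∨ ε = -1)
    {x y : F} (h : x * y⁻¹ = u * r ^ ε * u⁻¹) : St 1 x y := by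
  refine ⟨[u * r ^ ε * u⁻¹], by simp, ?_, by simpa using h⟩
  rintro z hz
  simp only [List.mem_singleton] at hz
  subst hz
  exact ⟨u, r, ε, hr, hε, rfl⟩

lemma rel1_mem : cmm a (t⁻¹ * a * t) ∈ RΓ := Or.inl rfl
lemma rel2_mem : cmm s t ∈ RΓ := Or.inr (Or.inl rfl)
lemma rel3_mem : (s⁻¹ * a * s)⁻¹ * a * (t⁻¹ * a * t) ∈ RΓ := Or.inr (Or.inr rfl)

def T (m : ℤ) : F := t ^ m
def S (p : ℤ) : F := s ^ p
def A (m : ℤ) : F := T (-m) * a * T m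
def Bw (p q : ℤ) : F := S (-p) * T (-q) * a * (T q * S p)

def c1 : F := s⁻¹ * a * s
def cm : F := s * a * s⁻¹

lemma A_one : A 1 = t⁻¹ * a * t := by
  simp [A, T]

lemma A_zero : A 0 = a := by simp [A, T]

lemma rel1 : St 1 (a * A 1) (A 1 * a) := by
  rw [A_one]
  refine St_one_of _ rel1_mem (a * (t⁻¹ * a * t)) 1 (Or.inl rfl) ?_
  rw [zpow_one]; unfold cmm; group

lemma rel2 : St 1 (s * t) (t * s) := by
  refine St_one_of _ rel2_mem (s * t) 1 (Or.inl rfl) ?_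
  rw [zpow_one]; unfold cmm; group

lemma rel3 : St 1 c1 (a * A 1) := by
  rw [A_one]
  refine St_one_of _ rel3_mem (s⁻¹ * a * s) (-1) (Or.inr rfl) ?_
  rw [zpow_neg_one]; unfold c1; group

/-- the four elementary `s/t` swaps -/
lemma sw_st : St 1 (s * t) (t * s) := rel2
lemma sw_ts : St 1 (t * s) (s * t) := rel2.symm
lemma sw_sti : St 1 (s * t⁻¹) (t⁻¹ * s) :=
  (rel2.congr t⁻¹ t⁻¹).rweq (by group) (by group) |>.symm
lemma sw_tis : St 1 (t⁻¹ * s) (s * t⁻¹) := sw_sti.symm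
lemma sw_sit : St 1 (s⁻¹ * t) (t * s⁻¹) :=
  (rel2.congr s⁻¹ s⁻¹).rweq (by group) (by group) |>.symm
lemma sw_tsi : St 1 (t * s⁻¹) (s⁻¹ * t) := sw_sit.symm
lemma sw_siti : St 1 (s⁻¹ * t⁻¹) (t⁻¹ * s⁻¹) :=
  (sw_sti.congr s⁻¹ s⁻¹).rweq (by group) (by group) |>.symm
lemma sw_tisi : St 1 (t⁻¹ * s⁻¹) (s⁻¹ * t⁻¹) := sw_siti.symm

lemma S_add (p q : ℤ) : S (p + q) = S p * S q := zpow_add s p q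
lemma T_add (p q : ℤ) : T (p + q) = T p * T q := zpow_add t p q
lemma S_zero : S 0 = 1 := rfl
lemma T_zero : T 0 = 1 := rfl
lemma S_one : S 1 = s := zpow_one s
lemma T_one : T 1 = t := zpow_one t
lemma S_neg_one : S (-1) = s⁻¹ := by simp [S]
lemma T_neg_one : T (-1) = t⁻¹ := by simp [T]

notation:50 x " ~[" k "] " y:51 => St k x y

instance (k l : ℕ) : Trans (St k) (St l) (St (k + l)) := ⟨St.trans⟩
instance (k : ℕ) : Trans (St k) (Eq : F → F → Prop) (St k) :=
  ⟨fun h e => e ▸ h⟩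
instance (k : ℕ) : Trans (Eq : F → F → Prop) (St k) (St k) :=
  ⟨fun e h => e ▸ h⟩

lemma St.gcongr {k} (u v : F) {w w' x y : F} (h : St k w w')
    (hx : x = u * w * v) (hy : y = u * w' * v) : St k x y :=
  (h.congr u v).rweq hx hy

lemma St.swap_inv_left {k} {x y : F} (h : St k (x * y) (y * x)) :
    St k (x⁻¹ * y) (y * x⁻¹) :=
  ((h.gcongr x⁻¹ x⁻¹ (by group) (by group) : St k (y * x⁻¹) (x⁻¹ * y))).symm

lemma St.swap_inv_right {k} {x y : F} (h : St k (x * y) (y * x)) :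
    St k (x * y⁻¹) (y⁻¹ * x) :=
  ((h.gcongr y⁻¹ y⁻¹ (by group) (by group) : St k (y⁻¹ * x) (x * y⁻¹))).symm

/-- swapping `t^e` (`e = ±1`) over `S p` costs `|p|`. -/
lemma sw_t_S (p : ℤ) : t * S p ~[p.natAbs] S p * t := by
  induction p using Int.induction_on with
  | zero => exact St.ofEq (by rw [S_zero]; group)
  | succ i ih =>
      have key : t * S ((i:ℤ)+1) ~[i + 1] S ((i:ℤ)+1) * t := by
        have := calc t * S ((i:ℤ)+1) = (t * S i) * s := by rw [S_add, S_one]; group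
          _ ~[(i:ℤ).natAbs] S i * (t * s) := ih.gcongr 1 s (by group) (by group)
          _ ~[1] (S i * s) * t := sw_ts.gcongr (S i) 1 (by group) (by group)
          _ = S ((i:ℤ)+1) * t := by rw [S_add, S_one]
        exact this.mono (by simp)
      exact key.mono (by omega)
  | pred i ih =>
      have e : S (-(i:ℤ) - 1) = S (-i) * s⁻¹ := by
        rw [show (-(i:ℤ) - 1) = -(i:ℤ) + (-1) by ring, S_add, S_neg_one]
      have key : t * S (-(i:ℤ)-1) ~[i + 1] S (-(i:ℤ)-1) * t := by
        have := calc t * S (-(i:ℤ)-1) = (t * S (-i)) * s⁻¹ := by rw [e]; group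
          _ ~[(-(i:ℤ)).natAbs] S (-i) * (t * s⁻¹) := ih.gcongr 1 s⁻¹ (by group) (by group)
          _ ~[1] (S (-i) * s⁻¹) * t := sw_tsi.gcongr (S (-i)) 1 (by group) (by group)
          _ = S (-(i:ℤ)-1) * t := by rw [e]
        exact this.mono (by simp)
      exact key.mono (by omega)

lemma S_neg (p : ℤ) : S (-p) = (S p)⁻¹ := zpow_neg s p
lemma T_neg (p : ℤ) : T (-p) = (T p)⁻¹ := zpow_neg t p

lemma sw_ti_S (p : ℤ) : t⁻¹ * S p ~[p.natAbs] S p * t⁻¹ := by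
  have h := (sw_t_S (-p)).inv
  have h2 := h.rweq (x := S p * t⁻¹) (y := t⁻¹ * S p)
    (by rw [mul_inv_rev, S_neg]; group) (by rw [mul_inv_rev, S_neg]; group)
  exact h2.symm.mono (by rw [Int.natAbs_neg])

lemma sw_s_T (q : ℤ) : s * T q ~[q.natAbs] T q * s := by
  induction q using Int.induction_on with
  | zero => exact St.ofEq (by rw [T_zero]; group)
  | succ i ih =>
      have key : s * T ((i:ℤ)+1) ~[i + 1] T ((i:ℤ)+1) * s := by
        have := calc s * T ((i:ℤ)+1) = (s * T i) * t := by rw [T_add, T_one]; group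
          _ ~[(i:ℤ).natAbs] T i * (s * t) := ih.gcongr 1 t (by group) (by group)
          _ ~[1] (T i * t) * s := sw_st.gcongr (T i) 1 (by group) (by group)
          _ = T ((i:ℤ)+1) * s := by rw [T_add, T_one]
        exact this.mono (by simp)
      exact key.mono (by omega)
  | pred i ih =>
      have e : T (-(i:ℤ) - 1) = T (-i) * t⁻¹ := by
        rw [show (-(i:ℤ) - 1) = -(i:ℤ) + (-1) by ring, T_add, T_neg_one]
      have key : s * T (-(i:ℤ)-1) ~[i + 1] T (-(i:ℤ)-1) * s := by
        have := calc s * T (-(i:ℤ)-1) = (s * T (-i)) * t⁻¹ := by rw [e]; group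
          _ ~[(-(i:ℤ)).natAbs] T (-i) * (s * t⁻¹) := ih.gcongr 1 t⁻¹ (by group) (by group)
          _ ~[1] (T (-i) * t⁻¹) * s := sw_sti.gcongr (T (-i)) 1 (by group) (by group)
          _ = T (-(i:ℤ)-1) * s := by rw [e]
        exact this.mono (by simp)
      exact key.mono (by omega)

lemma sw_si_T (q : ℤ) : s⁻¹ * T q ~[q.natAbs] T q * s⁻¹ := by
  have h := (sw_s_T (-q)).inv
  have h2 := h.rweq (x := T q * s⁻¹) (y := s⁻¹ * T q)
    (by rw [mul_inv_rev, T_neg]; group) (by rw [mul_inv_rev, T_neg]; group)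
  exact h2.symm.mono (by rw [Int.natAbs_neg])

/-! ### commutation of `a` with its `t`- and `s⁻¹`-conjugates -/

lemma F1 : A 1 ~[1] a⁻¹ * c1 :=
  rel3.symm.gcongr a⁻¹ 1 (by group) (by group)

lemma F2a : cm * (T (-1) * cm * T 1) ~[3] a := by
  have e1 : cm * (T (-1) * cm * T 1) = (s * a) * (s⁻¹ * t⁻¹) * ((s * a) * (s⁻¹ * t)) := by
    rw [T_neg_one, T_one]; unfold cm; group
  have := calc cm * (T (-1) * cm * T 1) = (s * a) * (s⁻¹ * t⁻¹) * ((s * a) * (s⁻¹ * t)) := e1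
    _ ~[1] (s * a) * (t⁻¹ * s⁻¹) * ((s * a) * (s⁻¹ * t)) :=
        sw_siti.gcongr (s * a) ((s * a) * (s⁻¹ * t)) (by group) (by group)
    _ ~[1] (s * a) * (t⁻¹ * s⁻¹) * ((s * a) * (t * s⁻¹)) :=
        sw_sit.gcongr ((s * a) * (t⁻¹ * s⁻¹) * (s * a)) 1 (by group) (by group)
    _ = s * (a * A 1) * s⁻¹ := by rw [A_one]; group
    _ ~[1] s * c1 * s⁻¹ := rel3.symm.gcongr s s⁻¹ (by group) (by group)
    _ = a := by unfold c1; group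
  exact this.mono (by omega)

lemma F2' : cm ~[3] a * (T (-1) * cm⁻¹ * T 1) :=
  F2a.gcongr 1 (T (-1) * cm * T 1)⁻¹
    (x := cm) (y := a * (T (-1) * cm⁻¹ * T 1)) (by group)
    (by rw [T_neg_one, T_one]; group)

lemma C1A : c1 * a ~[3] a * c1 := by
  have := calc c1 * a ~[1] (a * A 1) * a := rel3.gcongr 1 a (by group) (by group)
    _ ~[1] a * (a * A 1) := rel1.symm.gcongr a 1 (by group) (by group)
    _ ~[1] a * c1 := rel3.symm.gcongr a 1 (by group) (by group)
  exact this.mono (by omega)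

lemma Hst0 : a * cm ~[3] cm * a :=
  C1A.gcongr s s⁻¹ (by unfold cm c1; group) (by unfold cm c1; group)

/-- cost function: `(KH n).1` bounds commuting `a` with `A n`,
`(KH n).2` bounds commuting `A n` with `s a s⁻¹`. -/
def KH : ℕ → ℕ × ℕ
  | 0 => (0, 3)
  | n+1 => ((KH n).1 + (KH n).2 + 4*n + 6,
            ((KH n).1 + (KH n).2 + 4*n + 6) + (KH n).2 + 6)

lemma Zst (n : ℕ) : T (-(n:ℤ)) * c1 * T n ~[2*n] s⁻¹ * A n * s := by
  have e1 : T (-(n:ℤ)) * c1 * T n = T (-(n:ℤ)) * s⁻¹ * (a * (s * T n)) := by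
    unfold c1; group
  have := calc T (-(n:ℤ)) * c1 * T n = T (-(n:ℤ)) * s⁻¹ * (a * (s * T n)) := e1
    _ ~[(-(n:ℤ)).natAbs] s⁻¹ * T (-(n:ℤ)) * (a * (s * T n)) :=
        (sw_si_T (-(n:ℤ))).symm.gcongr 1 (a * (s * T n)) (by group) (by group)
    _ ~[((n:ℤ)).natAbs] s⁻¹ * T (-(n:ℤ)) * (a * (T n * s)) :=
        (sw_s_T n).gcongr (s⁻¹ * T (-(n:ℤ)) * a) 1 (by group) (by group)
    _ = s⁻¹ * A n * s := by unfold A; group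
  exact this.mono (by simp; omega)

lemma KHst (n : ℕ) :
    (a * A n ~[(KH n).1] A n * a) ∧ (A n * cm ~[(KH n).2] cm * A n) := by
  induction n with
  | zero =>
    constructor
    · exact St.ofEq (by simp [A_zero])
    · exact Hst0.rweq (by simp [A_zero]) (by simp [A_zero])
  | succ n ih =>
    obtain ⟨hK, hH⟩ := ih
    have hcast : ((n+1 : ℕ) : ℤ) = (n:ℤ)+1 := by push_cast; ring
    have hKn1 : a * A ((n:ℤ)+1) ~[(KH (n+1)).1] A ((n:ℤ)+1) * a := by
      have swA : a * (A (n:ℤ))⁻¹ ~[(KH n).1] (A (n:ℤ))⁻¹ * a := hK.swap_inv_right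
      have inner : a * (s⁻¹ * A (n:ℤ) * s) ~[(KH n).2] (s⁻¹ * A (n:ℤ) * s) * a :=
        hH.symm.gcongr s⁻¹ s (by unfold cm; group) (by unfold cm; group)
      have Z := Zst n
      have e1 : a * A ((n:ℤ)+1) = (a * T (-(n:ℤ))) * A 1 * T n := by unfold A T; group
      have := calc a * A ((n:ℤ)+1) = (a * T (-(n:ℤ))) * A 1 * T n := e1
        _ ~[1] (a * T (-(n:ℤ))) * (a⁻¹ * c1) * T n :=
            F1.gcongr (a * T (-(n:ℤ))) (T n) rfl rfl
        _ = a * (A (n:ℤ))⁻¹ * (T (-(n:ℤ)) * c1 * T n) := by unfold A T; group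
        _ ~[2*n] a * (A (n:ℤ))⁻¹ * (s⁻¹ * A (n:ℤ) * s) :=
            Z.gcongr (a * (A (n:ℤ))⁻¹) 1 (by group) (by group)
        _ ~[(KH n).1] (A (n:ℤ))⁻¹ * (a * (s⁻¹ * A (n:ℤ) * s)) :=
            swA.gcongr 1 (s⁻¹ * A (n:ℤ) * s) (by group) (by group)
        _ ~[(KH n).2] (A (n:ℤ))⁻¹ * ((s⁻¹ * A (n:ℤ) * s) * a) :=
            inner.gcongr ((A (n:ℤ))⁻¹) 1 (by group) (by group)
        _ ~[2*n] (A (n:ℤ))⁻¹ * ((T (-(n:ℤ)) * c1 * T n) * a) :=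
            Z.symm.gcongr ((A (n:ℤ))⁻¹) a (by group) (by group)
        _ ~[1] A ((n:ℤ)+1) * a :=
            F1.symm.gcongr (T (-(n:ℤ))) (T n * a) (by unfold A T; group) (by unfold A T; group)
      exact this.mono (by simp [KH]; omega)
    have hHn1 : A ((n:ℤ)+1) * cm ~[(KH (n+1)).2] cm * A ((n:ℤ)+1) := by
      have swH : A (n:ℤ) * cm⁻¹ ~[(KH n).2] cm⁻¹ * A (n:ℤ) := hH.swap_inv_right
      have := calc A ((n:ℤ)+1) * cm ~[3] A ((n:ℤ)+1) * (a * (T (-1) * cm⁻¹ * T 1)) := F2'.gcongr (A ((n:ℤ)+1)) 1 (by group) (by group)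
        _ ~[(KH (n+1)).1] (a * A ((n:ℤ)+1)) * (T (-1) * cm⁻¹ * T 1) :=
            hKn1.symm.gcongr 1 (T (-1) * cm⁻¹ * T 1) (by group) (by group)
        _ = a * (T (-1) * (A (n:ℤ) * cm⁻¹) * T 1) := by unfold A T; group
        _ ~[(KH n).2] a * (T (-1) * (cm⁻¹ * A (n:ℤ)) * T 1) :=
            swH.gcongr (a * T (-1)) (T 1) (by group) (by group)
        _ = (a * (T (-1) * cm⁻¹ * T 1)) * A ((n:ℤ)+1) := by unfold A T; group
        _ ~[3] cm * A ((n:ℤ)+1) := F2'.symm.gcongr 1 (A ((n:ℤ)+1)) (by group) (by group)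
      exact this.mono (by simp [KH]; omega)
    rw [hcast]
    exact ⟨hKn1, hHn1⟩

lemma lin_le_pow (n : ℕ) : 4 * n + 12 ≤ 4 ^ (n+2) := by
  induction n with
  | zero => norm_num
  | succ m ihm =>
    have h : (4:ℕ) ^ (m+1+2) = 4 * 4 ^ (m+2) := by ring
    omega

lemma KH_le (n : ℕ) : (KH n).1 ≤ 4 ^ (n+2) ∧ (KH n).2 ≤ 4 ^ (n+2) := by
  induction n with
  | zero => exact ⟨by norm_num [KH], by norm_num [KH]⟩
  | succ n ih =>
    obtain ⟨h1, h2⟩ := ih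
    have hpow : 4 * n + 12 ≤ 4 ^ (n+2) := lin_le_pow n
    have e : (4:ℕ) ^ (n+3) = 4 * 4 ^ (n+2) := by ring
    constructor
    · show (KH n).1 + (KH n).2 + 4*n + 6 ≤ 4 ^ (n+3)
      omega
    · show ((KH n).1 + (KH n).2 + 4*n + 6) + (KH n).2 + 6 ≤ 4 ^ (n+3)
      omega

/-! ### general commutation -/

lemma commA (m m' : ℤ) : A m * A m' ~[4 ^ ((m - m').natAbs + 2)] A m' * A m := by
  rcases le_or_gt m m' with h | h
  · set d : ℕ := (m' - m).natAbs with hd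
    have hdz : (d : ℤ) = m' - m := by omega
    have base := (KHst d).1
    have key : A m * A m' ~[(KH d).1] A m' * A m := by
      refine base.gcongr (T (-m)) (T m) ?_ ?_
      · rw [show A m * A m' = T (-m) * (a * A (m' - m)) * T m by unfold A T; group, hdz]
      · rw [show A m' * A m = T (-m) * (A (m' - m) * a) * T m by unfold A T; group, hdz]
    refine key.mono ?_
    calc (KH d).1 ≤ 4 ^ (d + 2) := (KH_le d).1
      _ = 4 ^ ((m - m').natAbs + 2) := by rw [show (m - m').natAbs = d by omega]
  · set d : ℕ := (m - m').natAbs with hd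
    have hdz : (d : ℤ) = m - m' := by omega
    have base := (KHst d).1.symm
    have key : A m * A m' ~[(KH d).1] A m' * A m := by
      refine base.gcongr (T (-m')) (T m') ?_ ?_
      · rw [show A m * A m' = T (-m') * (A (m - m') * a) * T m' by unfold A T; group, hdz]
      · rw [show A m' * A m = T (-m') * (a * A (m - m')) * T m' by unfold A T; group, hdz]
    exact key.mono ((KH_le d).1)

def Ae (m : ℤ) : Bool → F
  | true => A m
  | false => (A m)⁻¹

lemma commAe (m m' : ℤ) (e e' : Bool) :
    Ae m e * Ae m' e' ~[4 ^ ((m - m').natAbs + 2)] Ae m' e' * Ae m e := by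
  have h := commA m m'
  cases e <;> cases e' <;> simp only [Ae]
  · exact h.swap_inv_left.swap_inv_right
  · exact h.swap_inv_left
  · exact h.swap_inv_right
  · exact h

def prodA (L : List (ℤ × Bool)) : F := (L.map fun p => Ae p.1 p.2).prod

def Bw' (p q : ℤ) : F := S (-p) * T (-q) * a * (T q * S p)
def Be (p q : ℤ) : Bool → F
  | true => Bw' p q
  | false => (Bw' p q)⁻¹
def prodB (L : List (ℤ × ℤ × Bool)) : F := (L.map fun x => Be x.1 x.2.1 x.2.2).prod

lemma prodA_nil : prodA [] = 1 := rfl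
lemma prodA_cons (p) (L) : prodA (p :: L) = Ae p.1 p.2 * prodA L := by
  simp [prodA]
lemma prodB_nil : prodB [] = 1 := rfl
lemma prodB_cons (x) (L) : prodB (x :: L) = Be x.1 x.2.1 x.2.2 * prodB L := by
  simp [prodB]
lemma prodA_append (L1 L2) : prodA (L1 ++ L2) = prodA L1 * prodA L2 := by
  simp [prodA]

/-! ### crossing letters over `B`-terms -/

lemma s_conj_B (p q : ℤ) (e : Bool) : s * Be p q e * s⁻¹ = Be (p-1) q e := by
  have h : s * Bw' p q * s⁻¹ = Bw' (p-1) q := by unfold Bw' S T; group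
  cases e
  · show s * (Bw' p q)⁻¹ * s⁻¹ = (Bw' (p-1) q)⁻¹
    rw [← h]; group
  · exact h

lemma si_conj_B (p q : ℤ) (e : Bool) : s⁻¹ * Be p q e * s = Be (p+1) q e := by
  have h : s⁻¹ * Bw' p q * s = Bw' (p+1) q := by unfold Bw' S T; group
  cases e
  · show s⁻¹ * (Bw' p q)⁻¹ * s = (Bw' (p+1) q)⁻¹
    rw [← h]; group
  · exact h

lemma s_cross_prodB (ℓ : List (ℤ × ℤ × Bool)) :
    s * prodB ℓ = prodB (ℓ.map fun x => (x.1 - 1, x.2.1, x.2.2)) * s := by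
  induction ℓ with
  | nil => simp [prodB_nil]
  | cons x ℓ ih =>
      rw [List.map_cons, prodB_cons, prodB_cons, ← s_conj_B x.1 x.2.1 x.2.2]
      rw [show s * (Be x.1 x.2.1 x.2.2 * prodB ℓ)
            = (s * Be x.1 x.2.1 x.2.2 * s⁻¹) * (s * prodB ℓ) by group, ih]
      group

lemma si_cross_prodB (ℓ : List (ℤ × ℤ × Bool)) :
    s⁻¹ * prodB ℓ = prodB (ℓ.map fun x => (x.1 + 1, x.2.1, x.2.2)) * s⁻¹ := by
  induction ℓ with
  | nil => simp [prodB_nil]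
  | cons x ℓ ih =>
      rw [List.map_cons, prodB_cons, prodB_cons, ← si_conj_B x.1 x.2.1 x.2.2]
      rw [show s⁻¹ * (Be x.1 x.2.1 x.2.2 * prodB ℓ)
            = (s⁻¹ * Be x.1 x.2.1 x.2.2 * s) * (s⁻¹ * prodB ℓ) by group, ih]
      group

lemma t_cross_Bw (p q : ℤ) : t * Bw' p q ~[2 * p.natAbs] Bw' p (q-1) * t := by
  have e1 : t * Bw' p q = (t * S (-p)) * (T (-q) * a * (T q * S p)) := by unfold Bw'; group
  have := calc t * Bw' p q = (t * S (-p)) * (T (-q) * a * (T q * S p)) := e1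
    _ ~[(-p).natAbs] (S (-p) * t) * (T (-q) * a * (T q * S p)) :=
        (sw_t_S (-p)).gcongr 1 (T (-q) * a * (T q * S p)) (by group) (by group)
    _ = S (-p) * T (-(q-1)) * a * (T (q-1) * (t * S p)) := by unfold T; group
    _ ~[p.natAbs] S (-p) * T (-(q-1)) * a * (T (q-1) * (S p * t)) :=
        (sw_t_S p).gcongr (S (-p) * T (-(q-1)) * a * T (q-1)) 1 (by group) (by group)
    _ = Bw' p (q-1) * t := by unfold Bw'; group
  exact this.mono (by simp [Int.natAbs_neg]; omega)

lemma ti_cross_Bw (p q : ℤ) : t⁻¹ * Bw' p q ~[2 * p.natAbs] Bw' p (q+1) * t⁻¹ := by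
  have e1 : t⁻¹ * Bw' p q = (t⁻¹ * S (-p)) * (T (-q) * a * (T q * S p)) := by unfold Bw'; group
  have := calc t⁻¹ * Bw' p q = (t⁻¹ * S (-p)) * (T (-q) * a * (T q * S p)) := e1
    _ ~[(-p).natAbs] (S (-p) * t⁻¹) * (T (-q) * a * (T q * S p)) :=
        (sw_ti_S (-p)).gcongr 1 (T (-q) * a * (T q * S p)) (by group) (by group)
    _ = S (-p) * T (-(q+1)) * a * (T (q+1) * (t⁻¹ * S p)) := by unfold T; group
    _ ~[p.natAbs] S (-p) * T (-(q+1)) * a * (T (q+1) * (S p * t⁻¹)) :=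
        (sw_ti_S p).gcongr (S (-p) * T (-(q+1)) * a * T (q+1)) 1 (by group) (by group)
    _ = Bw' p (q+1) * t⁻¹ := by unfold Bw'; group
  exact this.mono (by simp [Int.natAbs_neg]; omega)

lemma t_cross_B (p q : ℤ) (e : Bool) :
    t * Be p q e ~[2 * p.natAbs] Be p (q-1) e * t := by
  have h := t_cross_Bw p q
  cases e
  · show t * (Bw' p q)⁻¹ ~[2 * p.natAbs] (Bw' p (q-1))⁻¹ * t
    exact h.symm.gcongr (Bw' p (q-1))⁻¹ (Bw' p q)⁻¹ (by group) (by group)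
  · exact h

lemma ti_cross_B (p q : ℤ) (e : Bool) :
    t⁻¹ * Be p q e ~[2 * p.natAbs] Be p (q+1) e * t⁻¹ := by
  have h := ti_cross_Bw p q
  cases e
  · show t⁻¹ * (Bw' p q)⁻¹ ~[2 * p.natAbs] (Bw' p (q+1))⁻¹ * t⁻¹
    exact h.symm.gcongr (Bw' p (q+1))⁻¹ (Bw' p q)⁻¹ (by group) (by group)
  · exact h

lemma t_cross_prodB (P : ℕ) (ℓ : List (ℤ × ℤ × Bool)) (hb : ∀ x ∈ ℓ, x.1.natAbs ≤ P) :
    t * prodB ℓ ~[2 * P * ℓ.length] prodB (ℓ.map fun x => (x.1, x.2.1 - 1, x.2.2)) * t := by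
  induction ℓ with
  | nil => exact St.ofEq (by simp [prodB_nil])
  | cons x ℓ ih =>
      have hx := hb x (by simp)
      have ihh := ih (fun y hy => hb y (by simp [hy]))
      have e0 : t * prodB (x :: ℓ) = (t * Be x.1 x.2.1 x.2.2) * prodB ℓ := by
        rw [prodB_cons]; group
      have e9 : Be x.1 (x.2.1 - 1) x.2.2 * (prodB (ℓ.map fun x => (x.1, x.2.1 - 1, x.2.2)) * t)
          = prodB ((x :: ℓ).map fun x => (x.1, x.2.1 - 1, x.2.2)) * t := by
        rw [List.map_cons, prodB_cons]; group
      have := calc t * prodB (x :: ℓ) = (t * Be x.1 x.2.1 x.2.2) * prodB ℓ := e0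
        _ ~[2 * x.1.natAbs] (Be x.1 (x.2.1 - 1) x.2.2 * t) * prodB ℓ :=
            (t_cross_B x.1 x.2.1 x.2.2).gcongr 1 (prodB ℓ) (by group) (by group)
        _ = Be x.1 (x.2.1 - 1) x.2.2 * (t * prodB ℓ) := by group
        _ ~[2 * P * ℓ.length] Be x.1 (x.2.1 - 1) x.2.2 *
              (prodB (ℓ.map fun x => (x.1, x.2.1 - 1, x.2.2)) * t) :=
            ihh.gcongr (Be x.1 (x.2.1 - 1) x.2.2) 1 (by group) (by group)
        _ = prodB ((x :: ℓ).map fun x => (x.1, x.2.1 - 1, x.2.2)) * t := e9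
      refine this.mono ?_
      have e2 : 2 * P * (ℓ.length + 1) = 2 * P + 2 * P * ℓ.length := by ring
      rw [List.length_cons, e2]
      omega

lemma ti_cross_prodB (P : ℕ) (ℓ : List (ℤ × ℤ × Bool)) (hb : ∀ x ∈ ℓ, x.1.natAbs ≤ P) :
    t⁻¹ * prodB ℓ ~[2 * P * ℓ.length] prodB (ℓ.map fun x => (x.1, x.2.1 + 1, x.2.2)) * t⁻¹ := by
  induction ℓ with
  | nil => exact St.ofEq (by simp [prodB_nil])
  | cons x ℓ ih =>
      have hx := hb x (by simp)
      have ihh := ih (fun y hy => hb y (by simp [hy]))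
      have e0 : t⁻¹ * prodB (x :: ℓ) = (t⁻¹ * Be x.1 x.2.1 x.2.2) * prodB ℓ := by
        rw [prodB_cons]; group
      have e9 : Be x.1 (x.2.1 + 1) x.2.2 * (prodB (ℓ.map fun x => (x.1, x.2.1 + 1, x.2.2)) * t⁻¹)
          = prodB ((x :: ℓ).map fun x => (x.1, x.2.1 + 1, x.2.2)) * t⁻¹ := by
        rw [List.map_cons, prodB_cons]; group
      have := calc t⁻¹ * prodB (x :: ℓ) = (t⁻¹ * Be x.1 x.2.1 x.2.2) * prodB ℓ := e0
        _ ~[2 * x.1.natAbs] (Be x.1 (x.2.1 + 1) x.2.2 * t⁻¹) * prodB ℓ :=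
            (ti_cross_B x.1 x.2.1 x.2.2).gcongr 1 (prodB ℓ) (by group) (by group)
        _ = Be x.1 (x.2.1 + 1) x.2.2 * (t⁻¹ * prodB ℓ) := by group
        _ ~[2 * P * ℓ.length] Be x.1 (x.2.1 + 1) x.2.2 *
              (prodB (ℓ.map fun x => (x.1, x.2.1 + 1, x.2.2)) * t⁻¹) :=
            ihh.gcongr (Be x.1 (x.2.1 + 1) x.2.2) 1 (by group) (by group)
        _ = prodB ((x :: ℓ).map fun x => (x.1, x.2.1 + 1, x.2.2)) * t⁻¹ := e9
      refine this.mono ?_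
      have e2 : 2 * P * (ℓ.length + 1) = 2 * P + 2 * P * ℓ.length := by ring
      rw [List.length_cons, e2]
      omega

/-! ### collection: every word is equivalent to a normal form -/

def lit : Letter × Bool → F
  | (x, true) => FreeGroup.of x
  | (x, false) => (FreeGroup.of x)⁻¹

lemma mk_cons (x : Letter × Bool) (L : List (Letter × Bool)) :
    FreeGroup.mk (x :: L) = lit x * FreeGroup.mk L := by
  obtain ⟨y, b⟩ := x
  cases b
  · show FreeGroup.mk ((y, false) :: L) = (FreeGroup.of y)⁻¹ * FreeGroup.mk L
    have h1 : (FreeGroup.of y)⁻¹ = FreeGroup.mk [(y, false)] := by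
      rw [show FreeGroup.of y = FreeGroup.mk [(y, true)] from rfl, FreeGroup.inv_mk]
      rfl
    rw [h1, FreeGroup.mul_mk]
    rfl
  · show FreeGroup.mk ((y, true) :: L) = FreeGroup.of y * FreeGroup.mk L
    rw [show FreeGroup.of y = FreeGroup.mk [(y, true)] from rfl, FreeGroup.mul_mk]
    rfl

lemma Bw'_zero : Be 0 0 true = a := by
  show Bw' 0 0 = a
  unfold Bw' S T; group

lemma Bw'_zero' : Be 0 0 false = a⁻¹ := by
  show (Bw' 0 0)⁻¹ = a⁻¹
  rw [show Bw' 0 0 = a from by unfold Bw' S T; group]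

lemma cost_step (n k c : ℕ) (hk : k ≤ 3 * n^3) (hc : c ≤ 2 * n^2 + n) :
    k + c ≤ 3 * (n+1)^3 := by nlinarith

lemma phase1 (L : List (Letter × Bool)) :
    ∃ (ℓ : List (ℤ × ℤ × Bool)) (σ τ : ℤ) (k : ℕ),
      (FreeGroup.mk L ~[k] prodB ℓ * (S σ * T τ)) ∧
      ℓ.length ≤ L.length ∧
      (∀ x ∈ ℓ, x.1.natAbs ≤ L.length ∧ x.2.1.natAbs ≤ L.length) ∧
      σ.natAbs ≤ L.length ∧ τ.natAbs ≤ L.length ∧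
      k ≤ 3 * L.length ^ 3 := by
  induction L with
  | nil =>
      have h0 : FreeGroup.mk ([] : List (Letter × Bool)) = 1 := rfl
      exact ⟨[], 0, 0, 0, St.ofEq (by simp [h0, prodB_nil, S_zero, T_zero]),
        by simp, by simp, by simp, by simp, by simp⟩
  | cons x L ih =>
      obtain ⟨ℓ, σ, τ, k, hst, hlen, hbound, hσ, hτ, hk⟩ := ih
      obtain ⟨y, b⟩ := x
      have hmk : FreeGroup.mk ((y, b) :: L) = lit (y, b) * FreeGroup.mk L := mk_cons _ _
      have hlc : ((y, b) :: L).length = L.length + 1 := rfl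
      cases y
      case a =>
        refine ⟨(0, 0, b) :: ℓ, σ, τ, k, ?_, ?_, ?_, ?_, ?_, ?_⟩
        · have e2 : lit (Letter.a, b) * (prodB ℓ * (S σ * T τ))
              = prodB ((0,0,b) :: ℓ) * (S σ * T τ) := by
            rw [prodB_cons]
            cases b
            · rw [Bw'_zero']; show a⁻¹ * _ = _; group
            · rw [Bw'_zero]; show a * _ = _; group
          calc FreeGroup.mk ((Letter.a, b) :: L) = lit (Letter.a, b) * FreeGroup.mk L := hmk
            _ ~[k] lit (Letter.a, b) * (prodB ℓ * (S σ * T τ)) :=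
                hst.gcongr (lit (Letter.a, b)) 1 (by group) (by group)
            _ = prodB ((0,0,b) :: ℓ) * (S σ * T τ) := e2
        · simp [hlc]; omega
        · intro z hz
          rcases List.mem_cons.1 hz with h | h
          · subst h; simp
          · have := hbound z h; constructor <;> [skip; skip] <;> omega
        · omega
        · omega
        · calc k ≤ 3 * L.length ^ 3 := hk
            _ ≤ 3 * (L.length + 1) ^ 3 := by nlinarith
      case s =>
        cases b
        case false =>
          refine ⟨ℓ.map fun x => (x.1 + 1, x.2.1, x.2.2), σ - 1, τ, k, ?_, ?_, ?_, ?_, ?_, ?_⟩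
          · have e2 : s⁻¹ * (prodB ℓ * (S σ * T τ))
                = prodB (ℓ.map fun x => (x.1 + 1, x.2.1, x.2.2)) * (S (σ-1) * T τ) := by
              rw [show s⁻¹ * (prodB ℓ * (S σ * T τ)) = (s⁻¹ * prodB ℓ) * (S σ * T τ) by group,
                si_cross_prodB]
              have : s⁻¹ * S σ = S (σ - 1) := by unfold S; group
              rw [show prodB (ℓ.map fun x => (x.1 + 1, x.2.1, x.2.2)) * s⁻¹ * (S σ * T τ)
                  = prodB (ℓ.map fun x => (x.1 + 1, x.2.1, x.2.2)) * ((s⁻¹ * S σ) * T τ) by group,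
                this]
            calc FreeGroup.mk ((Letter.s, false) :: L) = s⁻¹ * FreeGroup.mk L := hmk
              _ ~[k] s⁻¹ * (prodB ℓ * (S σ * T τ)) := hst.gcongr s⁻¹ 1 (by group) (by group)
              _ = prodB (ℓ.map fun x => (x.1 + 1, x.2.1, x.2.2)) * (S (σ-1) * T τ) := e2
          · simp [hlc]; omega
          · intro z hz
            obtain ⟨w, hw, rfl⟩ := List.mem_map.1 hz
            have := hbound w hw
            constructor <;> simp <;> omega
          · simp [hlc]; omega
          · simp [hlc]; omega
          · calc k ≤ 3 * L.length ^ 3 := hk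
              _ ≤ 3 * (L.length + 1) ^ 3 := by nlinarith
        case true =>
          refine ⟨ℓ.map fun x => (x.1 - 1, x.2.1, x.2.2), σ + 1, τ, k, ?_, ?_, ?_, ?_, ?_, ?_⟩
          · have e2 : s * (prodB ℓ * (S σ * T τ))
                = prodB (ℓ.map fun x => (x.1 - 1, x.2.1, x.2.2)) * (S (σ+1) * T τ) := by
              rw [show s * (prodB ℓ * (S σ * T τ)) = (s * prodB ℓ) * (S σ * T τ) by group,
                s_cross_prodB]
              have : s * S σ = S (σ + 1) := by unfold S; group
              rw [show prodB (ℓ.map fun x => (x.1 - 1, x.2.1, x.2.2)) * s * (S σ * T τ)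
                  = prodB (ℓ.map fun x => (x.1 - 1, x.2.1, x.2.2)) * ((s * S σ) * T τ) by group,
                this]
            calc FreeGroup.mk ((Letter.s, true) :: L) = s * FreeGroup.mk L := hmk
              _ ~[k] s * (prodB ℓ * (S σ * T τ)) := hst.gcongr s 1 (by group) (by group)
              _ = prodB (ℓ.map fun x => (x.1 - 1, x.2.1, x.2.2)) * (S (σ+1) * T τ) := e2
          · simp [hlc]; omega
          · intro z hz
            obtain ⟨w, hw, rfl⟩ := List.mem_map.1 hz
            have := hbound w hw
            constructor <;> simp <;> omega
          · simp [hlc]; omega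
          · simp [hlc]; omega
          · calc k ≤ 3 * L.length ^ 3 := hk
              _ ≤ 3 * (L.length + 1) ^ 3 := by nlinarith
      case t =>
        cases b
        case false =>
          have h1 := ti_cross_prodB L.length ℓ (fun z hz => (hbound z hz).1)
          have h2 := sw_ti_S σ
          refine ⟨ℓ.map fun x => (x.1, x.2.1 + 1, x.2.2), σ, τ - 1,
            k + 2 * L.length * ℓ.length + σ.natAbs, ?_, ?_, ?_, ?_, ?_, ?_⟩
          · have e3 : t⁻¹ * S σ * T τ = (t⁻¹ * S σ) * T τ := by group
            calc FreeGroup.mk ((Letter.t, false) :: L) = t⁻¹ * FreeGroup.mk L := hmk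
              _ ~[k] t⁻¹ * (prodB ℓ * (S σ * T τ)) := hst.gcongr t⁻¹ 1 (by group) (by group)
              _ = (t⁻¹ * prodB ℓ) * (S σ * T τ) := by group
              _ ~[2 * L.length * ℓ.length] (prodB (ℓ.map fun x => (x.1, x.2.1 + 1, x.2.2)) * t⁻¹) * (S σ * T τ) :=
                  h1.gcongr 1 (S σ * T τ) (by group) (by group)
              _ = prodB (ℓ.map fun x => (x.1, x.2.1 + 1, x.2.2)) * ((t⁻¹ * S σ) * T τ) := by group
              _ ~[σ.natAbs] prodB (ℓ.map fun x => (x.1, x.2.1 + 1, x.2.2)) * ((S σ * t⁻¹) * T τ) :=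
                  h2.gcongr (prodB (ℓ.map fun x => (x.1, x.2.1 + 1, x.2.2))) (T τ) (by group) (by group)
              _ = prodB (ℓ.map fun x => (x.1, x.2.1 + 1, x.2.2)) * (S σ * T (τ-1)) := by
                  rw [show T (τ - 1) = t⁻¹ * T τ by unfold T; group]; group
          · simp [hlc]; omega
          · intro z hz
            obtain ⟨w, hw, rfl⟩ := List.mem_map.1 hz
            have := hbound w hw
            constructor <;> simp <;> omega
          · simp [hlc]; omega
          · simp [hlc]; omega
          · have h3 : ℓ.length ≤ L.length := hlen
            have h4 : σ.natAbs ≤ L.length := hσ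
            have h5 : 2 * L.length * ℓ.length ≤ 2 * L.length ^ 2 := by nlinarith
            have h6 := cost_step L.length k (2 * L.length * ℓ.length + σ.natAbs) hk (by omega)
            rw [hlc]
            omega
        case true =>
          have h1 := t_cross_prodB L.length ℓ (fun z hz => (hbound z hz).1)
          have h2 := sw_t_S σ
          refine ⟨ℓ.map fun x => (x.1, x.2.1 - 1, x.2.2), σ, τ + 1,
            k + 2 * L.length * ℓ.length + σ.natAbs, ?_, ?_, ?_, ?_, ?_, ?_⟩
          · calc FreeGroup.mk ((Letter.t, true) :: L) = t * FreeGroup.mk L := hmk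
              _ ~[k] t * (prodB ℓ * (S σ * T τ)) := hst.gcongr t 1 (by group) (by group)
              _ = (t * prodB ℓ) * (S σ * T τ) := by group
              _ ~[2 * L.length * ℓ.length] (prodB (ℓ.map fun x => (x.1, x.2.1 - 1, x.2.2)) * t) * (S σ * T τ) :=
                  h1.gcongr 1 (S σ * T τ) (by group) (by group)
              _ = prodB (ℓ.map fun x => (x.1, x.2.1 - 1, x.2.2)) * ((t * S σ) * T τ) := by group
              _ ~[σ.natAbs] prodB (ℓ.map fun x => (x.1, x.2.1 - 1, x.2.2)) * ((S σ * t) * T τ) :=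
                  h2.gcongr (prodB (ℓ.map fun x => (x.1, x.2.1 - 1, x.2.2))) (T τ) (by group) (by group)
              _ = prodB (ℓ.map fun x => (x.1, x.2.1 - 1, x.2.2)) * (S σ * T (τ+1)) := by
                  rw [show T (τ + 1) = t * T τ by unfold T; group]; group
          · simp [hlc]; omega
          · intro z hz
            obtain ⟨w, hw, rfl⟩ := List.mem_map.1 hz
            have := hbound w hw
            constructor <;> simp <;> omega
          · simp [hlc]; omega
          · simp [hlc]; omega
          · have h3 : ℓ.length ≤ L.length := hlen
            have h4 : σ.natAbs ≤ L.length := hσ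
            have h5 : 2 * L.length * ℓ.length ≤ 2 * L.length ^ 2 := by nlinarith
            have h6 := cost_step L.length k (2 * L.length * ℓ.length + σ.natAbs) hk (by omega)
            rw [hlc]
            omega

/-! ### homomorphism invariants -/

lemma hom_kills_CP {G : Type*} [Group G] (ψ : F →* G) (hψ : ∀ r ∈ RΓ, ψ r = 1)
    {k : ℕ} {x : F} (h : CP k x) : ψ x = 1 := by
  obtain ⟨l, -, h2, rfl⟩ := h
  induction l with
  | nil => simp
  | cons y l ih =>
      rw [List.prod_cons, map_mul]
      obtain ⟨u, r, ε, hr, -, rfl⟩ := h2 y (by simp)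
      rw [ih (fun z hz => h2 z (by simp [hz]))]
      simp [hψ r hr]

lemma hom_St {G : Type*} [Group G] (ψ : F →* G) (hψ : ∀ r ∈ RΓ, ψ r = 1)
    {k : ℕ} {w w' : F} (h : St k w w') : ψ w = ψ w' := by
  have := hom_kills_CP ψ hψ (h : CP k (w * w'⁻¹))
  rw [map_mul, map_inv] at this
  exact (mul_inv_eq_one.1 this)

def es : F →* Multiplicative ℤ :=
  FreeGroup.lift fun x => Multiplicative.ofAdd (match x with
    | Letter.s => (1 : ℤ)
    | _ => 0)

def et : F →* Multiplicative ℤ :=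
  FreeGroup.lift fun x => Multiplicative.ofAdd (match x with
    | Letter.t => (1 : ℤ)
    | _ => 0)

lemma es_a : es a = 1 := by simp [es, a]
lemma es_s : es s = Multiplicative.ofAdd (1 : ℤ) := by simp [es, s]
lemma es_t : es t = 1 := by simp [es, t]
lemma et_a : et a = 1 := by simp [et, a]
lemma et_s : et s = 1 := by simp [et, s]
lemma et_t : et t = Multiplicative.ofAdd (1 : ℤ) := by simp [et, t]

lemma es_rel : ∀ r ∈ RΓ, es r = 1 := by
  rintro r (rfl | rfl | rfl) <;>
    simp [cmm, map_mul, map_inv, es_a, es_s, es_t] <;> group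

lemma et_rel : ∀ r ∈ RΓ, et r = 1 := by
  rintro r (rfl | rfl | rfl) <;>
    simp [cmm, map_mul, map_inv, et_a, et_s, et_t] <;> group

lemma es_Be (p q : ℤ) (e : Bool) : es (Be p q e) = 1 := by
  have h : es (Bw' p q) = 1 := by
    simp [Bw', S, T, map_mul, map_zpow, es_a, es_s, es_t]
  cases e
  · show es (Bw' p q)⁻¹ = 1; simp [h]
  · exact h

lemma et_Be (p q : ℤ) (e : Bool) : et (Be p q e) = 1 := by
  have h : et (Bw' p q) = 1 := by
    simp [Bw', S, T, map_mul, map_zpow, et_a, et_s, et_t]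
  cases e
  · show et (Bw' p q)⁻¹ = 1; simp [h]
  · exact h

lemma es_prodB (ℓ : List (ℤ × ℤ × Bool)) : es (prodB ℓ) = 1 := by
  induction ℓ with
  | nil => simp [prodB_nil]
  | cons x ℓ ih => rw [prodB_cons, map_mul, ih, es_Be, mul_one]

lemma et_prodB (ℓ : List (ℤ × ℤ × Bool)) : et (prodB ℓ) = 1 := by
  induction ℓ with
  | nil => simp [prodB_nil]
  | cons x ℓ ih => rw [prodB_cons, map_mul, ih, et_Be, mul_one]

/-! ### the affine representation over ℚ(X) -/

noncomputable section

abbrev FF := RatFunc ℚ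

lemma X_ne : (RatFunc.X : FF) ≠ 0 := RatFunc.X_ne_zero

lemma oneX_ne : (1 + RatFunc.X : FF) ≠ 0 := by
  have h : (1 + Polynomial.X : Polynomial ℚ) ≠ 0 := by
    intro h
    have := congrArg (fun p => Polynomial.coeff p 0) h
    simp at this
  have : algebraMap (Polynomial ℚ) FF (1 + Polynomial.X) ≠ 0 := by
    rw [Ne, map_eq_zero_iff _ (RatFunc.algebraMap_injective ℚ)]
    exact h
  simpa [map_add, RatFunc.algebraMap_X] using this

@[ext] structure AffG where
  u : FFˣ
  m : FF

instance : Mul AffG := ⟨fun x y => ⟨x.u * y.u, x.m + (x.u : FF) * y.m⟩⟩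
instance : One AffG := ⟨⟨1, 0⟩⟩
instance : Inv AffG := ⟨fun x => ⟨x.u⁻¹, -((x.u⁻¹ : FFˣ) : FF) * x.m⟩⟩

lemma AffG.mul_def (x y : AffG) : x * y = ⟨x.u * y.u, x.m + (x.u : FF) * y.m⟩ := rfl
lemma AffG.one_def : (1 : AffG) = ⟨1, 0⟩ := rfl
lemma AffG.inv_def (x : AffG) : x⁻¹ = ⟨x.u⁻¹, -((x.u⁻¹ : FFˣ) : FF) * x.m⟩ := rfl

instance : Group AffG where
  mul_assoc x y z := by
    ext <;> simp [AffG.mul_def] <;> ring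
  one_mul x := by ext <;> simp [AffG.mul_def, AffG.one_def]
  mul_one x := by ext <;> simp [AffG.mul_def, AffG.one_def]
  inv_mul_cancel x := by
    ext <;> simp [AffG.mul_def, AffG.inv_def, AffG.one_def]

def ux : FFˣ := Units.mk0 RatFunc.X X_ne
def us : FFˣ := Units.mk0 (1 + RatFunc.X) oneX_ne

def φ : F →* AffG :=
  FreeGroup.lift fun x => match x with
    | Letter.a => ⟨1, 1⟩
    | Letter.s => ⟨us⁻¹, 0⟩
    | Letter.t => ⟨ux⁻¹, 0⟩

lemma φ_a : φ a = ⟨1, 1⟩ := by simp [φ, a]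
lemma φ_s : φ s = ⟨us⁻¹, 0⟩ := by simp [φ, s]
lemma φ_t : φ t = ⟨ux⁻¹, 0⟩ := by simp [φ, t]

/-- diagonal embedding -/
def diag : FFˣ →* AffG where
  toFun v := ⟨v, 0⟩
  map_one' := rfl
  map_mul' v w := by ext <;> simp [AffG.mul_def]

lemma AffG.one_u : (1 : AffG).u = 1 := rfl
lemma AffG.one_m : (1 : AffG).m = 0 := rfl

lemma φ_T (m : ℤ) : φ (T m) = ⟨ux ^ (-m), 0⟩ := by
  have h : φ (T m) = diag (ux⁻¹) ^ m := by
    rw [T, map_zpow, φ_t]; rfl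
  rw [h, ← map_zpow, inv_zpow, ← zpow_neg]
  rfl

lemma φ_S (p : ℤ) : φ (S p) = ⟨us ^ (-p), 0⟩ := by
  have h : φ (S p) = diag (us⁻¹) ^ p := by
    rw [S, map_zpow, φ_s]; rfl
  rw [h, ← map_zpow, inv_zpow, ← zpow_neg]
  rfl

lemma φ_rel : ∀ r ∈ RΓ, φ r = 1 := by
  have hT1 : φ (t⁻¹ * a * t) = ⟨1, RatFunc.X⟩ := by
    rw [map_mul, map_mul, map_inv, φ_t, φ_a]
    ext <;> simp [AffG.mul_def, AffG.inv_def, ux]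
  rintro r (rfl | rfl | rfl)
  · unfold cmm
    rw [map_mul, map_mul, map_mul, map_inv, map_inv, φ_a, hT1]
    ext <;> simp [AffG.mul_def, AffG.inv_def, AffG.one_u, AffG.one_m] <;> ring
  · unfold cmm
    rw [map_mul, map_mul, map_mul, map_inv, map_inv, φ_s, φ_t]
    ext <;> simp [AffG.mul_def, AffG.inv_def, AffG.one_u, AffG.one_m] <;> ring
  · have hS1 : φ (s⁻¹ * a * s) = ⟨1, 1 + RatFunc.X⟩ := by
      rw [map_mul, map_mul, map_inv, φ_s, φ_a]
      ext <;> simp [AffG.mul_def, AffG.inv_def, us]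
    rw [map_mul, map_mul, map_inv, hS1, hT1, φ_a]
    ext <;> simp [AffG.mul_def, AffG.inv_def, AffG.one_u, AffG.one_m] <;> ring

lemma φ_A (m : ℤ) : φ (A m) = ⟨1, (RatFunc.X : FF) ^ m⟩ := by
  rw [A, map_mul, map_mul, φ_T, φ_T, φ_a]
  have hval : ((ux : FF)) ^ m = (RatFunc.X : FF) ^ m := rfl
  ext <;> simp [AffG.mul_def, neg_neg] <;> simp [hval]

end

noncomputable section

/-- sum of signed monomials attached to an `A`-list -/
def msum : List (ℤ × Bool) → FF
  | [] => 0
  | (m, true) :: L => (RatFunc.X : FF) ^ m + msum L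
  | (m, false) :: L => -(RatFunc.X : FF) ^ m + msum L

lemma φ_Ae (m : ℤ) (e : Bool) :
    φ (Ae m e) = ⟨1, if e then (RatFunc.X : FF) ^ m else -(RatFunc.X : FF) ^ m⟩ := by
  cases e
  · show φ (A m)⁻¹ = _
    rw [map_inv, φ_A]
    ext <;> simp [AffG.inv_def]
  · show φ (A m) = _
    rw [φ_A]; simp

lemma φ_prodA (L : List (ℤ × Bool)) : φ (prodA L) = ⟨1, msum L⟩ := by
  induction L with
  | nil => show φ 1 = _; rw [map_one]; rfl
  | cons p L ih =>
      obtain ⟨m, e⟩ := p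
      rw [prodA_cons, map_mul, ih, φ_Ae]
      cases e <;> ext <;> simp [AffG.mul_def, msum]

/-- the polynomial of an `A`-list with nonnegative exponents -/
def pol : List (ℤ × Bool) → Polynomial ℚ
  | [] => 0
  | (m, true) :: L => Polynomial.X ^ m.toNat + pol L
  | (m, false) :: L => -Polynomial.X ^ m.toNat + pol L

lemma pol_eq_msum (L : List (ℤ × Bool)) (h : ∀ p ∈ L, 0 ≤ p.1) :
    algebraMap (Polynomial ℚ) FF (pol L) = msum L := by
  induction L with
  | nil => simp [pol, msum]
  | cons p L ih =>
      obtain ⟨m, e⟩ := p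
      have hm : 0 ≤ m := (h (m, e) (by simp))
      have hx : algebraMap (Polynomial ℚ) FF (Polynomial.X ^ m.toNat)
          = (RatFunc.X : FF) ^ m := by
        rw [map_pow, RatFunc.algebraMap_X, ← zpow_natCast, Int.toNat_of_nonneg hm]
      have ihh := ih (fun q hq => h q (by simp [hq]))
      cases e
      · show algebraMap (Polynomial ℚ) FF (-Polynomial.X ^ m.toNat + pol L) = _
        rw [map_add, map_neg, hx, ihh]; rfl
      · show algebraMap (Polynomial ℚ) FF (Polynomial.X ^ m.toNat + pol L) = _
        rw [map_add, hx, ihh]; rfl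

lemma msum_zero_of_φ (L : List (ℤ × Bool)) (h : ∀ p ∈ L, 0 ≤ p.1)
    (hφ : φ (prodA L) = 1) : pol L = 0 := by
  have h1 : msum L = 0 := by
    have := φ_prodA L
    rw [hφ] at this
    have := congrArg AffG.m this.symm
    simpa [AffG.one_m] using this
  have h2 : algebraMap (Polynomial ℚ) FF (pol L) = 0 := by rw [pol_eq_msum L h, h1]
  exact (map_eq_zero_iff _ (RatFunc.algebraMap_injective ℚ)).1 h2

lemma pol_coeff_nonneg (m0 : ℤ) :
    ∀ L : List (ℤ × Bool), (∀ p ∈ L, 0 ≤ p.1) → 0 ≤ m0 → (m0, false) ∉ L →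
      0 ≤ (pol L).coeff m0.toNat := by
  intro L
  induction L with
  | nil => intro _ _ _; simp [pol]
  | cons p L ih =>
      intro hnn h0 hmem
      obtain ⟨m, e⟩ := p
      have hm : 0 ≤ m := hnn (m, e) (by simp)
      have ihh := ih (fun q hq => hnn q (by simp [hq])) h0 (fun hc => hmem (by simp [hc]))
      cases e
      · have hne : m ≠ m0 := by
          intro hc; exact hmem (by simp [hc])
        have hne' : m0.toNat ≠ m.toNat := by omega
        show (0:ℚ) ≤ (-Polynomial.X ^ m.toNat + pol L).coeff m0.toNat
        rw [Polynomial.coeff_add, Polynomial.coeff_neg, Polynomial.coeff_X_pow,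
          if_neg hne']
        simpa using ihh
      · show (0:ℚ) ≤ (Polynomial.X ^ m.toNat + pol L).coeff m0.toNat
        rw [Polynomial.coeff_add, Polynomial.coeff_X_pow]
        by_cases hc : m0.toNat = m.toNat
        · rw [if_pos hc]; positivity
        · rw [if_neg hc]; simpa using ihh

lemma pol_coeff_nonpos (m0 : ℤ) :
    ∀ L : List (ℤ × Bool), (∀ p ∈ L, 0 ≤ p.1) → 0 ≤ m0 → (m0, true) ∉ L →
      (pol L).coeff m0.toNat ≤ 0 := by
  intro L
  induction L with
  | nil => intro _ _ _; simp [pol]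
  | cons p L ih =>
      intro hnn h0 hmem
      obtain ⟨m, e⟩ := p
      have hm : 0 ≤ m := hnn (m, e) (by simp)
      have ihh := ih (fun q hq => hnn q (by simp [hq])) h0 (fun hc => hmem (by simp [hc]))
      cases e
      · show (-Polynomial.X ^ m.toNat + pol L).coeff m0.toNat ≤ (0:ℚ)
        rw [Polynomial.coeff_add, Polynomial.coeff_neg, Polynomial.coeff_X_pow]
        by_cases hc : m0.toNat = m.toNat
        · rw [if_pos hc]
          have : (pol L).coeff m0.toNat ≤ 0 := ihh
          linarith
        · rw [if_neg hc]; simpa using ihh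
      · have hne : m ≠ m0 := by
          intro hc; exact hmem (by simp [hc])
        have hne' : m0.toNat ≠ m.toNat := by omega
        show (Polynomial.X ^ m.toNat + pol L).coeff m0.toNat ≤ (0:ℚ)
        rw [Polynomial.coeff_add, Polynomial.coeff_X_pow, if_neg hne']
        simpa using ihh

lemma find_pair (m0 : ℤ) (e0 : Bool) (L : List (ℤ × Bool))
    (h0 : 0 ≤ m0) (hnn : ∀ p ∈ L, 0 ≤ p.1)
    (hsum : pol ((m0, e0) :: L) = 0) : (m0, !e0) ∈ L := by
  by_contra hmem
  cases e0
  · have h1 : pol ((m0, false) :: L) = -Polynomial.X ^ m0.toNat + pol L := rfl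
    have h2 := congrArg (fun p => Polynomial.coeff p m0.toNat) hsum
    rw [h1] at h2
    simp only [Polynomial.coeff_add, Polynomial.coeff_neg, Polynomial.coeff_X_pow,
      if_pos rfl, Polynomial.coeff_zero] at h2
    norm_num at h2
    have h3 := pol_coeff_nonpos m0 L hnn h0 (by simpa using hmem)
    linarith
  · have h1 : pol ((m0, true) :: L) = Polynomial.X ^ m0.toNat + pol L := rfl
    have h2 := congrArg (fun p => Polynomial.coeff p m0.toNat) hsum
    rw [h1] at h2
    simp only [Polynomial.coeff_add, Polynomial.coeff_X_pow,
      if_pos rfl, Polynomial.coeff_zero] at h2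
    norm_num at h2
    have h3 := pol_coeff_nonneg m0 L hnn h0 (by simpa using hmem)
    linarith

end

/-! ### cancellation of a balanced `A`-list -/

lemma pol_cons (m : ℤ) (e : Bool) (L : List (ℤ × Bool)) :
    pol ((m, e) :: L)
      = (if e then Polynomial.X ^ m.toNat else -Polynomial.X ^ m.toNat) + pol L := by
  cases e <;> rfl

lemma pol_append (L1 L2 : List (ℤ × Bool)) : pol (L1 ++ L2) = pol L1 + pol L2 := by
  induction L1 with
  | nil => simp [pol]
  | cons p L1 ih =>
      obtain ⟨m, e⟩ := p
      rw [List.cons_append, pol_cons, pol_cons, ih]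
      ring

lemma Ae_cancel (m : ℤ) (e : Bool) : Ae m e * Ae m (!e) = 1 := by
  cases e
  · show (A m)⁻¹ * A m = 1; group
  · show A m * (A m)⁻¹ = 1; group

lemma swap_bound (M : ℕ) (m m' : ℤ) (hm : 0 ≤ m ∧ m ≤ M) (hm' : 0 ≤ m' ∧ m' ≤ M)
    (e e' : Bool) :
    Ae m e * Ae m' e' ~[4 ^ (M + 2)] Ae m' e' * Ae m e := by
  refine (commAe m m' e e').mono (Nat.pow_le_pow_right (by norm_num) ?_)
  have : (m - m').natAbs ≤ M := by omega
  omega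

lemma bubble (M : ℕ) (y : ℤ × Bool) (L1 L2 : List (ℤ × Bool))
    (hy : 0 ≤ y.1 ∧ y.1 ≤ M) (h1 : ∀ p ∈ L1, 0 ≤ p.1 ∧ p.1 ≤ M) :
    prodA (L1 ++ y :: L2) ~[L1.length * 4 ^ (M + 2)] prodA (y :: (L1 ++ L2)) := by
  induction L1 with
  | nil => exact (St.ofEq rfl).mono (Nat.zero_le _)
  | cons x L1 ih =>
      have hx := h1 x (by simp)
      have ihh := ih (fun p hp => h1 p (by simp [hp]))
      have e0 : prodA ((x :: L1) ++ y :: L2) = Ae x.1 x.2 * prodA (L1 ++ y :: L2) := by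
        rw [List.cons_append, prodA_cons]
      have := calc prodA ((x :: L1) ++ y :: L2) = Ae x.1 x.2 * prodA (L1 ++ y :: L2) := e0
        _ ~[L1.length * 4 ^ (M + 2)] Ae x.1 x.2 * prodA (y :: (L1 ++ L2)) :=
            ihh.gcongr (Ae x.1 x.2) 1 (by group) (by group)
        _ = (Ae x.1 x.2 * Ae y.1 y.2) * prodA (L1 ++ L2) := by rw [prodA_cons]; group
        _ ~[4 ^ (M + 2)] (Ae y.1 y.2 * Ae x.1 x.2) * prodA (L1 ++ L2) :=
            (swap_bound M x.1 y.1 hx hy x.2 y.2).gcongr 1 (prodA (L1 ++ L2))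
              (by group) (by group)
        _ = prodA (y :: x :: (L1 ++ L2)) := by rw [prodA_cons, prodA_cons]; group
      refine this.mono ?_
      have e2 : (x :: L1).length * 4 ^ (M+2) = L1.length * 4 ^ (M+2) + 4 ^ (M+2) := by
        rw [List.length_cons]; ring
      omega

lemma cancel (M : ℕ) : ∀ (N : ℕ) (L : List (ℤ × Bool)), L.length ≤ N →
    (∀ p ∈ L, 0 ≤ p.1 ∧ p.1 ≤ M) → pol L = 0 →
    prodA L ~[N * N * 4 ^ (M + 2)] 1 := by
  intro N
  induction N with
  | zero =>
      intro L hL _ _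
      have : L = [] := List.eq_nil_of_length_eq_zero (by omega)
      subst this
      exact (St.ofEq rfl).mono (Nat.zero_le _)
  | succ N ih =>
      intro L hL hb hpol
      match L with
      | [] => exact (St.ofEq rfl).mono (Nat.zero_le _)
      | (m0, e0) :: Lt =>
          have h0 : 0 ≤ m0 := (hb (m0, e0) (by simp)).1
          have hbt : ∀ p ∈ Lt, 0 ≤ p.1 ∧ p.1 ≤ M := fun p hp => hb p (by simp [hp])
          have hmem : (m0, !e0) ∈ Lt :=
            find_pair m0 e0 Lt h0 (fun p hp => (hbt p hp).1) hpol
          obtain ⟨L1, L2, rfl⟩ := List.append_of_mem hmem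
          have hb1 : ∀ p ∈ L1, 0 ≤ p.1 ∧ p.1 ≤ M :=
            fun p hp => hbt p (by simp [hp])
          have hpol2 : pol (L1 ++ L2) = 0 := by
            have e1 : pol ((m0, e0) :: (L1 ++ (m0, !e0) :: L2))
                = pol (L1 ++ L2)
                  + ((if e0 then Polynomial.X ^ m0.toNat else -Polynomial.X ^ m0.toNat)
                  + (if !e0 then Polynomial.X ^ m0.toNat else -Polynomial.X ^ m0.toNat)) := by
              rw [pol_cons, pol_append, pol_append, pol_cons]
              ring
            have e2 : ((if e0 then Polynomial.X ^ m0.toNat else -Polynomial.X ^ m0.toNat)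
                  + (if !e0 then Polynomial.X ^ m0.toNat else -Polynomial.X ^ m0.toNat))
                  = (0 : Polynomial ℚ) := by cases e0 <;> simp
            rw [e1, e2, add_zero] at hpol
            exact hpol
          have hlen2 : (L1 ++ L2).length ≤ N := by
            have := hL
            simp only [List.length_cons, List.length_append] at this ⊢
            omega
          have hb2 : ∀ p ∈ L1 ++ L2, 0 ≤ p.1 ∧ p.1 ≤ M := by
            intro p hp
            rcases List.mem_append.1 hp with h | h
            · exact hb1 p h
            · exact hbt p (by simp [h])
          have ihh := ih (L1 ++ L2) hlen2 hb2 hpol2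
          have hbub := bubble M (m0, !e0) L1 L2 ⟨h0, (hb (m0,e0) (by simp)).2⟩ hb1
          have hL1 : L1.length ≤ N := by
            simp only [List.length_cons, List.length_append] at hL
            omega
          have e4 : prodA ((m0, e0) :: (L1 ++ (m0, !e0) :: L2))
              = Ae m0 e0 * prodA (L1 ++ (m0, !e0) :: L2) := by rw [prodA_cons]
          have := calc prodA ((m0, e0) :: (L1 ++ (m0, !e0) :: L2)) = Ae m0 e0 * prodA (L1 ++ (m0, !e0) :: L2) := e4
            _ ~[L1.length * 4 ^ (M+2)] Ae m0 e0 * prodA ((m0, !e0) :: (L1 ++ L2)) :=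
                hbub.gcongr (Ae m0 e0) 1 (by group) (by group)
            _ = (Ae m0 e0 * Ae m0 (!e0)) * prodA (L1 ++ L2) := by rw [prodA_cons]; group
            _ = prodA (L1 ++ L2) := by rw [Ae_cancel]; group
            _ ~[N * N * 4 ^ (M+2)] 1 := ihh
          refine this.mono ?_
          nlinarith [hL1, Nat.zero_le ((4:ℕ) ^ (M+2))]

/-! ### expansion of `B`-terms into `A`-lists -/

lemma Bw_zero_q (q : ℤ) : Bw' 0 q = A q := by unfold Bw' A S T; group

lemma expand_step (p : ℕ) (q : ℤ) :
    Bw' (p+1) q ~[2 * q.natAbs + 1] Bw' p q * Bw' p (q+1) := by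
  have e0 : Bw' (p+1:ℕ) q = S (-(p:ℤ)) * (s⁻¹ * T (-q)) * a * (T q * s) * S p := by
    unfold Bw' S T; push_cast; group
  have := calc Bw' (p+1:ℕ) q = S (-(p:ℤ)) * (s⁻¹ * T (-q)) * a * (T q * s) * S p := e0
    _ ~[(-q).natAbs] S (-(p:ℤ)) * (T (-q) * s⁻¹) * a * (T q * s) * S p :=
        (sw_si_T (-q)).gcongr (S (-(p:ℤ))) (a * (T q * s) * S p) (by group) (by group)
    _ ~[q.natAbs] S (-(p:ℤ)) * (T (-q) * s⁻¹) * a * (s * T q) * S p :=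
        (sw_s_T q).symm.gcongr (S (-(p:ℤ)) * (T (-q) * s⁻¹) * a) (S (p:ℤ)) (by group) (by group)
    _ = (S (-(p:ℤ)) * T (-q)) * c1 * (T q * S p) := by unfold c1; group
    _ ~[1] (S (-(p:ℤ)) * T (-q)) * (a * (t⁻¹ * a * t)) * (T q * S p) := by
        have h := rel3.gcongr (S (-(p:ℤ)) * T (-q)) (T q * S p) rfl rfl
        rw [A_one] at h
        exact h
    _ = Bw' p q * Bw' p (q+1) := by unfold Bw' S T; group
  exact this.mono (by simp [Int.natAbs_neg]; omega)

lemma Ae_inv (m : ℤ) (e : Bool) : (Ae m e)⁻¹ = Ae m (!e) := by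
  cases e
  · show ((A m)⁻¹)⁻¹ = A m; group
  · rfl

lemma prodA_inv (L : List (ℤ × Bool)) :
    (prodA L)⁻¹ = prodA (L.reverse.map fun p => (p.1, !p.2)) := by
  induction L with
  | nil => simp [prodA]
  | cons p L ih =>
      obtain ⟨m, e⟩ := p
      rw [prodA_cons, mul_inv_rev, ih, Ae_inv, List.reverse_cons, List.map_append,
        prodA_append]
      simp [prodA]

lemma expandB (p : ℕ) : ∀ (q : ℤ), ∃ L : List (ℤ × Bool),
    (Bw' p q ~[3 ^ p * (2 * q.natAbs + 2 * p + 5)] prodA L) ∧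
    L.length = 2 ^ p ∧ ∀ x ∈ L, q ≤ x.1 ∧ x.1 ≤ q + p := by
  induction p with
  | zero =>
      intro q
      refine ⟨[(q, true)], ?_, by simp, by simp⟩
      refine (St.ofEq ?_).mono (Nat.zero_le _)
      rw [Nat.cast_zero, Bw_zero_q]
      show A q = Ae q true * 1
      rw [mul_one]; rfl
  | succ p ih =>
      intro q
      obtain ⟨L1, h1, hl1, hb1⟩ := ih q
      obtain ⟨L2, h2, hl2, hb2⟩ := ih (q+1)
      refine ⟨L1 ++ L2, ?_, by simp [hl1, hl2]; ring, ?_⟩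
      · have hmul : Bw' p q * Bw' p (q+1)
            ~[3 ^ p * (2 * q.natAbs + 2 * p + 5) + 3 ^ p * (2 * (q+1).natAbs + 2 * p + 5)]
            prodA (L1 ++ L2) := by
          have := h1.mul h2
          rwa [prodA_append]
        have := (expand_step p q).trans hmul
        refine this.mono ?_
        have h3p : 1 ≤ (3:ℕ) ^ p := Nat.one_le_pow _ _ (by norm_num)
        have m1 : 3^p * (2 * (q+1).natAbs + 2*p+5) ≤ 3^p * (2 * q.natAbs + 2*p+7) :=
          Nat.mul_le_mul_left _ (by omega)
        have key : 2 * q.natAbs + 1 ≤ 3^p * (2 * q.natAbs + 2*p+9) := by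
          calc 2 * q.natAbs + 1 ≤ 1 * (2 * q.natAbs + 2*p+9) := by omega
            _ ≤ 3^p * (2 * q.natAbs + 2*p+9) := Nat.mul_le_mul_right _ h3p
        have e5 : 3^p * (2 * q.natAbs + 2*p+9) + 3^p * (2 * q.natAbs + 2*p+5)
            + 3^p * (2 * q.natAbs + 2*p+7) = 3^(p+1) * (2 * q.natAbs + 2*(p+1)+5) := by ring
        linarith
      · intro x hx
        rcases List.mem_append.1 hx with h | h
        · have := hb1 x h; omega
        · have := hb2 x h
          constructor <;> push_cast <;> omega

lemma expandBe (p : ℕ) (q : ℤ) (e : Bool) : ∃ L : List (ℤ × Bool),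
    (Be (p:ℤ) q e ~[3 ^ p * (2 * q.natAbs + 2 * p + 5)] prodA L) ∧
    L.length = 2 ^ p ∧ ∀ x ∈ L, q ≤ x.1 ∧ x.1 ≤ q + p := by
  obtain ⟨L, h, hl, hb⟩ := expandB p q
  cases e
  · refine ⟨L.reverse.map fun p => (p.1, !p.2), ?_, by simp [hl], ?_⟩
    · have := h.inv
      rw [prodA_inv] at this
      exact this
    · intro x hx
      simp only [List.mem_map, List.mem_reverse] at hx
      obtain ⟨y, hy, rfl⟩ := hx
      exact hb y hy
  · exact ⟨L, h, hl, hb⟩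

lemma expand_prodB (P Q : ℕ) : ∀ ℓ : List (ℤ × ℤ × Bool),
    (∀ x ∈ ℓ, 0 ≤ x.1 ∧ x.1 ≤ P ∧ x.2.1.natAbs ≤ Q) →
    ∃ L : List (ℤ × Bool),
      (prodB ℓ ~[ℓ.length * (3 ^ P * (2 * Q + 2 * P + 5))] prodA L) ∧
      L.length ≤ ℓ.length * 2 ^ P ∧ ∀ x ∈ L, -(Q:ℤ) ≤ x.1 ∧ x.1 ≤ Q + P := by
  intro ℓ
  induction ℓ with
  | nil =>
      intro _
      exact ⟨[], (St.ofEq rfl).mono (Nat.zero_le _), by simp, by simp⟩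
  | cons x ℓ ih =>
      intro hb
      obtain ⟨p, q, e⟩ := x
      obtain ⟨hp0, hpP, hqQ⟩ := hb (p, q, e) (by simp)
      have hp0 : (0:ℤ) ≤ p := hp0
      have hpP : p ≤ (P:ℤ) := hpP
      have hqQ : q.natAbs ≤ Q := hqQ
      obtain ⟨L1, h1, hl1, hb1⟩ := expandBe p.toNat q e
      obtain ⟨L2, h2, hl2, hb2⟩ := ih (fun y hy => hb y (by simp [hy]))
      have hcast : ((p.toNat : ℤ)) = p := Int.toNat_of_nonneg hp0
      rw [hcast] at h1
      have hcost1 : 3 ^ p.toNat * (2 * q.natAbs + 2 * p.toNat + 5)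
          ≤ 3 ^ P * (2 * Q + 2 * P + 5) := by
        have e1 : (3:ℕ) ^ p.toNat ≤ 3 ^ P := Nat.pow_le_pow_right (by norm_num) (by omega)
        exact Nat.mul_le_mul e1 (by omega)
      have hmul := (h1.mono hcost1).mul h2
      refine ⟨L1 ++ L2, ?_, ?_, ?_⟩
      · rw [← prodA_append] at hmul
        have e0 : prodB ((p,q,e) :: ℓ) = Be p q e * prodB ℓ := prodB_cons _ _
        refine (St.ofEq e0).trans hmul |>.mono ?_
        rw [List.length_cons]
        have e1 : (ℓ.length + 1) * (3 ^ P * (2 * Q + 2 * P + 5))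
            = ℓ.length * (3 ^ P * (2 * Q + 2 * P + 5)) + 3 ^ P * (2 * Q + 2 * P + 5) := by
          ring
        omega
      · rw [List.length_append, List.length_cons, hl1]
        have : (2:ℕ) ^ p.toNat ≤ 2 ^ P := Nat.pow_le_pow_right (by norm_num) (by omega)
        have e1 : (ℓ.length + 1) * 2 ^ P = ℓ.length * 2 ^ P + 2 ^ P := by ring
        omega
      · intro y hy
        rcases List.mem_append.1 hy with h | h
        · have := hb1 y h; omega
        · exact hb2 y h

lemma ti_conj_prodA (L : List (ℤ × Bool)) :
    t⁻¹ * prodA L * t = prodA (L.map fun p => (p.1 + 1, p.2)) := by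
  induction L with
  | nil => simp [prodA]
  | cons x L ih =>
      obtain ⟨m, e⟩ := x
      have hA : t⁻¹ * Ae m e * t = Ae (m+1) e := by
        cases e
        · show t⁻¹ * (A m)⁻¹ * t = (A (m+1))⁻¹
          unfold A T; group
        · show t⁻¹ * A m * t = A (m+1)
          unfold A T; group
      rw [List.map_cons, prodA_cons, prodA_cons, ← hA, ← ih]
      group

lemma Tconj_prodA (k : ℕ) (L : List (ℤ × Bool)) :
    T (-(k:ℤ)) * prodA L * T k = prodA (L.map fun p => (p.1 + (k:ℤ), p.2)) := by
  induction k with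
  | zero => simp [T_zero]
  | succ k ih =>
      have e : T (-((k:ℕ)+1:ℤ)) * prodA L * T ((k:ℕ)+1:ℤ)
          = t⁻¹ * (T (-(k:ℤ)) * prodA L * T (k:ℤ)) * t := by unfold T; group
      have ec : ((k+1:ℕ):ℤ) = ((k:ℕ):ℤ) + 1 := by push_cast; ring
      have hf : ((fun p : ℤ × Bool => (p.1 + 1, p.2)) ∘ fun p : ℤ × Bool => (p.1 + (k:ℤ), p.2))
          = fun p : ℤ × Bool => (p.1 + ((k:ℤ) + 1), p.2) := by
        funext p; simp [Function.comp]; ring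
      rw [ec, e, ih, ti_conj_prodA, List.map_map, hf]
  
lemma Sconj_prodB (k : ℕ) (ℓ : List (ℤ × ℤ × Bool)) :
    S (-(k:ℤ)) * prodB ℓ * S k = prodB (ℓ.map fun x => (x.1 + (k:ℤ), x.2.1, x.2.2)) := by
  induction k with
  | zero => simp [S_zero]
  | succ k ih =>
      have e : S (-((k:ℕ)+1:ℤ)) * prodB ℓ * S ((k:ℕ)+1:ℤ)
          = s⁻¹ * (S (-(k:ℤ)) * prodB ℓ * S (k:ℤ)) * s := by unfold S; group
      have ec : ((k+1:ℕ):ℤ) = ((k:ℕ):ℤ) + 1 := by push_cast; ring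
      have e2 : s⁻¹ * prodB (ℓ.map fun x => (x.1 + (k:ℤ), x.2.1, x.2.2)) * s
          = prodB ((ℓ.map fun x => (x.1 + (k:ℤ), x.2.1, x.2.2)).map
              fun x => (x.1 + 1, x.2.1, x.2.2)) := by
        rw [si_cross_prodB]; group
      have hf : ((fun x : ℤ × ℤ × Bool => (x.1 + 1, x.2.1, x.2.2))
            ∘ fun x : ℤ × ℤ × Bool => (x.1 + (k:ℤ), x.2.1, x.2.2))
          = fun x : ℤ × ℤ × Bool => (x.1 + ((k:ℤ) + 1), x.2.1, x.2.2) := by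
        funext x; simp [Function.comp]; ring
      rw [ec, e, ih, e2, List.map_map, hf]

/-! ### final assembly -/

lemma pow2_mono {x y : ℕ} (h : x ≤ y) : (2:ℕ)^x ≤ 2^y := Nat.pow_le_pow_right (by norm_num) h

lemma main_bound (n : ℕ) (hn : 1 ≤ n) (w : F)
    (hlen : (FreeGroup.toWord w).length ≤ n)
    (hncl : w ∈ Subgroup.normalClosure RΓ) :
    area RΓ w ≤ 64 * 2 ^ (64 * n) := by
  classical
  set L : List (Letter × Bool) := FreeGroup.toWord w with hL
  have hw : FreeGroup.mk L = w := FreeGroup.mk_toWord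
  obtain ⟨ℓ, σ, τ, k1, hst1, hlen1, hbound1, hσ, hτ, hk1⟩ := phase1 L
  rw [hw] at hst1
  -- σ = τ = 0
  have hkeres : Subgroup.normalClosure RΓ ≤ es.ker :=
    Subgroup.normalClosure_le_normal (fun r hr => es_rel r hr)
  have hkeret : Subgroup.normalClosure RΓ ≤ et.ker :=
    Subgroup.normalClosure_le_normal (fun r hr => et_rel r hr)
  have hesw : es w = 1 := hkeres hncl
  have hetw : et w = 1 := hkeret hncl
  have hes2 : es (prodB ℓ * (S σ * T τ)) = 1 := by
    rw [← hom_St es es_rel hst1]; exact hesw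
  have het2 : et (prodB ℓ * (S σ * T τ)) = 1 := by
    rw [← hom_St et et_rel hst1]; exact hetw
  have hσ0 : σ = 0 := by
    have : es (prodB ℓ * (S σ * T τ)) = Multiplicative.ofAdd σ := by
      rw [map_mul, es_prodB, map_mul, one_mul, S, T, map_zpow, map_zpow, es_s, es_t,
        one_zpow, mul_one, ← ofAdd_zsmul]
      simp
    rw [this] at hes2
    simpa using hes2
  have hτ0 : τ = 0 := by
    have : et (prodB ℓ * (S σ * T τ)) = Multiplicative.ofAdd τ := by
      rw [map_mul, et_prodB, map_mul, one_mul, S, T, map_zpow, map_zpow, et_s, et_t,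
        one_zpow, one_mul, ← ofAdd_zsmul]
      simp
    rw [this] at het2
    simpa using het2
  subst hσ0; subst hτ0
  have hst1' : w ~[k1] prodB ℓ := hst1.rweq rfl (by rw [S_zero, T_zero]; group)
  -- conjugate by S (-n)
  set ℓ₁ : List (ℤ × ℤ × Bool) := ℓ.map fun x => (x.1 + (n:ℤ), x.2.1, x.2.2) with hℓ₁
  have hconj1 : S (-(n:ℤ)) * prodB ℓ * S (n:ℤ) = prodB ℓ₁ := Sconj_prodB n ℓ
  have hst2 : S (-(n:ℤ)) * w * S (n:ℤ) ~[k1] prodB ℓ₁ := by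
    have := hst1'.gcongr (S (-(n:ℤ))) (S (n:ℤ)) rfl rfl
    rwa [hconj1] at this
  have hLn : L.length ≤ n := hlen
  have hb₁ : ∀ x ∈ ℓ₁, 0 ≤ x.1 ∧ x.1 ≤ ((2*n : ℕ):ℤ) ∧ x.2.1.natAbs ≤ n := by
    intro x hx
    obtain ⟨y, hy, rfl⟩ := List.mem_map.1 hx
    obtain ⟨h1, h2⟩ := hbound1 y hy
    have h1n : y.1.natAbs ≤ n := le_trans h1 hLn
    have h2n : y.2.1.natAbs ≤ n := le_trans h2 hLn
    refine ⟨by simp; omega, by simp; push_cast; omega, by simp; omega⟩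
  obtain ⟨L₂, hst3, hlen2, hb2⟩ := expand_prodB (2*n) n ℓ₁ hb₁
  -- conjugate by T (-n)
  set L₃ : List (ℤ × Bool) := L₂.map fun p => (p.1 + (n:ℤ), p.2) with hL₃
  have hconj2 : T (-(n:ℤ)) * prodA L₂ * T (n:ℤ) = prodA L₃ := Tconj_prodA n L₂
  have hst4 : (T (-(n:ℤ)) * S (-(n:ℤ))) * w * (S (n:ℤ) * T (n:ℤ))
      ~[k1 + ℓ₁.length * (3 ^ (2*n) * (2 * n + 2 * (2*n) + 5))] prodA L₃ := by
    have hh := (hst2.trans hst3).gcongr (T (-(n:ℤ))) (T (n:ℤ))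
      (x := (T (-(n:ℤ)) * S (-(n:ℤ))) * w * (S (n:ℤ) * T (n:ℤ)))
      (y := T (-(n:ℤ)) * prodA L₂ * T (n:ℤ)) (by group) (by group)
    rwa [hconj2] at hh
  -- φ-invariant gives pol L₃ = 0
  have hkerφ : Subgroup.normalClosure RΓ ≤ φ.ker :=
    Subgroup.normalClosure_le_normal (fun r hr => φ_rel r hr)
  have hφw : φ w = 1 := hkerφ hncl
  have hφ3 : φ (prodA L₃) = 1 := by
    have hinv := hom_St φ φ_rel hst4
    have hcc : (T (-(n:ℤ)) * S (-(n:ℤ))) * w * (S (n:ℤ) * T (n:ℤ))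
        = (T (-(n:ℤ)) * S (-(n:ℤ))) * w * (T (-(n:ℤ)) * S (-(n:ℤ)))⁻¹ := by
      unfold S T; group
    rw [hcc, map_mul, map_mul, map_inv, hφw] at hinv
    rw [← hinv]
    group
  have hb3 : ∀ p ∈ L₃, 0 ≤ p.1 ∧ p.1 ≤ ((4*n : ℕ):ℤ) := by
    intro p hp
    obtain ⟨y, hy, rfl⟩ := List.mem_map.1 hp
    obtain ⟨h1, h2⟩ := hb2 y hy
    constructor
    · simp; push_cast at h1 ⊢; omega
    · simp; push_cast at h2 ⊢; omega
  have hpol3 : pol L₃ = 0 :=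
    msum_zero_of_φ L₃ (fun p hp => (hb3 p hp).1) hφ3
  have hlen3 : L₃.length ≤ n * 2 ^ (2*n) := by
    have e0 : L₃.length = L₂.length := by simp [hL₃]
    rw [e0]
    calc L₂.length ≤ ℓ₁.length * 2 ^ (2*n) := hlen2
      _ ≤ n * 2 ^ (2*n) := by
          have hll : ℓ₁.length ≤ n := by simp [hℓ₁]; omega
          exact Nat.mul_le_mul_right _ hll
  have hst5 : prodA L₃ ~[(n * 2^(2*n)) * (n * 2^(2*n)) * 4 ^ (4*n + 2)] 1 :=
    cancel (4*n) (n * 2^(2*n)) L₃ hlen3 hb3 hpol3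
  -- put everything together
  have htot := hst4.trans hst5
  have hback := htot.gcongr (T (-(n:ℤ)) * S (-(n:ℤ)))⁻¹ (T (-(n:ℤ)) * S (-(n:ℤ)))
    (x := w) (y := (T (-(n:ℤ)) * S (-(n:ℤ)))⁻¹ * 1 * (T (-(n:ℤ)) * S (-(n:ℤ))))
    (by unfold S T; group) rfl
  have hback1 : w ~[k1 + ℓ₁.length * (3 ^ (2*n) * (2 * n + 2 * (2*n) + 5))
      + (n * 2^(2*n)) * (n * 2^(2*n)) * 4 ^ (4*n + 2)] 1 :=
    hback.rweq rfl (by group)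
  have harea := area_le_of_St hback1
  refine le_trans harea ?_
  -- arithmetic
  have h2n : n ≤ 2^n := Nat.le_of_lt (Nat.lt_two_pow_self (n := n))
  have hk1' : k1 ≤ 2 ^ (3*n + 2) := by
    calc k1 ≤ 3 * L.length ^ 3 := hk1
      _ ≤ 3 * n ^ 3 := by
          have := Nat.pow_le_pow_left hLn 3
          omega
      _ ≤ 3 * (2^n) ^ 3 := by
          have := Nat.pow_le_pow_left h2n 3
          omega
      _ = 3 * 2 ^ (3*n) := by rw [← pow_mul]; ring_nf
      _ ≤ 4 * 2 ^ (3*n) := by omega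
      _ = 2 ^ (3*n + 2) := by ring
  have hk2' : ℓ₁.length * (3 ^ (2*n) * (2 * n + 2 * (2*n) + 5)) ≤ 2 ^ (6*n + 4) := by
    have e1 : ℓ₁.length ≤ 2^n := by
      have : ℓ₁.length ≤ n := by simp [hℓ₁]; omega
      omega
    have e2 : (3:ℕ) ^ (2*n) ≤ 2 ^ (4*n) := by
      calc (3:ℕ) ^ (2*n) ≤ 4 ^ (2*n) := Nat.pow_le_pow_left (by norm_num) _
        _ = 2 ^ (4*n) := by rw [show (4:ℕ) = 2^2 by norm_num, ← pow_mul]; ring_nf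
    have e3 : 2 * n + 2 * (2*n) + 5 ≤ 2 ^ (n + 4) := by
      have : 6*n + 5 ≤ 16 * 2^n := by omega
      calc 2 * n + 2 * (2*n) + 5 = 6*n + 5 := by ring
        _ ≤ 16 * 2^n := this
        _ = 2 ^ (n+4) := by ring
    calc ℓ₁.length * (3 ^ (2*n) * (2 * n + 2 * (2*n) + 5))
        ≤ 2^n * (2^(4*n) * 2^(n+4)) := by
          exact Nat.mul_le_mul e1 (Nat.mul_le_mul e2 e3)
      _ = 2 ^ (6*n + 4) := by rw [← pow_add, ← pow_add]; ring_nf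
  have hk3' : (n * 2^(2*n)) * (n * 2^(2*n)) * 4 ^ (4*n + 2) ≤ 2 ^ (14*n + 4) := by
    have e1 : n * 2^(2*n) ≤ 2^(3*n) := by
      calc n * 2^(2*n) ≤ 2^n * 2^(2*n) := Nat.mul_le_mul_right _ h2n
        _ = 2^(3*n) := by rw [← pow_add]; ring_nf
    have e2 : (4:ℕ) ^ (4*n+2) = 2 ^ (8*n + 4) := by
      rw [show (4:ℕ) = 2^2 by norm_num, ← pow_mul]; ring_nf
    calc (n * 2^(2*n)) * (n * 2^(2*n)) * 4 ^ (4*n + 2)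
        ≤ 2^(3*n) * 2^(3*n) * 2^(8*n+4) := by
          rw [e2]; exact Nat.mul_le_mul (Nat.mul_le_mul e1 e1) le_rfl
      _ = 2 ^ (14*n + 4) := by rw [← pow_add, ← pow_add]; ring_nf
  calc k1 + ℓ₁.length * (3 ^ (2*n) * (2 * n + 2 * (2*n) + 5))
        + (n * 2^(2*n)) * (n * 2^(2*n)) * 4 ^ (4*n + 2)
      ≤ 2^(3*n+2) + 2^(6*n+4) + 2^(14*n+4) := by omega
    _ ≤ 3 * 2^(14*n+4) := by
        have g1 := pow2_mono (show 3*n+2 ≤ 14*n+4 by omega)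
        have g2 := pow2_mono (show 6*n+4 ≤ 14*n+4 by omega)
        omega
    _ ≤ 2^2 * 2^(14*n+4) := by omega
    _ = 2^(14*n+6) := by rw [← pow_add]; congr 1; omega
    _ ≤ 2^(64*n) := pow2_mono (by omega)
    _ ≤ 64 * 2^(64*n) := by omega

end B

/-- The exponential upper bound half of Theorem 1: there is a constant `C ≥ 1` such
that every word of length at most `n` representing the identity of Baumslag's group
has area at most `C·2^(C·n)`. -/
theorem baumslag_dehn_exponential_upper_bound :
    ∃ C : ℕ, 1 ≤ C ∧ ∀ n : ℕ, 1 ≤ n → ∀ w : F,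
      (FreeGroup.toWord w).length ≤ n →
      w ∈ Subgroup.normalClosure RΓ →
      area RΓ w ≤ C * 2 ^ (C * n) :=
  ⟨64, by norm_num, fun n hn w hlen hncl => B.main_bound n hn w hlen hncl⟩
end

section
/- Let u be a real number with u ≠ 0 and u ≠ −1, and set A = [[1,1,0],[0,1,1],[0,0,1]] and T = diag(1, u, −u²−u), both invertible 3×3 real matrices. Then for every n ≥ 0, the commutator [A, T⁻ⁿATⁿ] = A⁻¹(T⁻ⁿA⁻¹Tⁿ)A(T⁻ⁿATⁿ) equals the matrix [[1, 0, (−u−1)ⁿ − uⁿ],[0,1,0],[0,0,1]]. -/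
open Matrix

/-- For real `u ≠ 0, −1`, with `A` the full upper unitriangular matrix with ones and
`T = diag(1, u, −u²−u)`, both invertible, the commutator `[A, T⁻ⁿATⁿ]` (with the
convention `[X,Y] = X⁻¹Y⁻¹XY`) equals the elementary matrix with `(−u−1)ⁿ − uⁿ` in the
top-right corner, for every `n ≥ 0`. -/
theorem commutator_with_conjugate_power (u : ℝ) (hu0 : u ≠ 0) (hu1 : u ≠ -1) :
    let A : Matrix (Fin 3) (Fin 3) ℝ := !![1, 1, 0; 0, 1, 1; 0, 0, 1]
    let T : Matrix (Fin 3) (Fin 3) ℝ := !![1, 0, 0; 0, u, 0; 0, 0, -u^2 - u]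
    IsUnit A ∧ IsUnit T ∧
    ∀ n : ℕ,
      A⁻¹ * ((T ^ n)⁻¹ * A * T ^ n)⁻¹ * A * ((T ^ n)⁻¹ * A * T ^ n) =
        !![1, 0, (-u - 1) ^ n - u ^ n; 0, 1, 0; 0, 0, 1] := by
  intro A T
  have hu1' : u + 1 ≠ 0 := fun h => hu1 (by linarith)
  have hw : (-u - 1 : ℝ) ≠ 0 := fun h => hu1 (by linarith)
  have hv : (-u^2 - u : ℝ) ≠ 0 := by
    have h : (-u^2 - u : ℝ) = -(u * (u + 1)) := by ring
    rw [h, neg_ne_zero]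
    exact mul_ne_zero hu0 hu1'
  have hone := Matrix.one_fin_three (α := ℝ)
  have hAinv : A⁻¹ = !![1, -1, 1; 0, 1, -1; 0, 0, 1] := by
    apply Matrix.inv_eq_left_inv
    rw [show A = !![1, 1, 0; 0, 1, 1; 0, 0, 1] from rfl, Matrix.mul_fin_three, hone]
    norm_num
  have hA : IsUnit A := by
    rw [Matrix.isUnit_iff_isUnit_det]
    apply Matrix.isUnit_det_of_left_inverse (B := !![1, -1, 1; 0, 1, -1; 0, 0, 1])
    rw [show A = !![1, 1, 0; 0, 1, 1; 0, 0, 1] from rfl, Matrix.mul_fin_three, hone]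
    norm_num
  have hT : IsUnit T := by
    rw [Matrix.isUnit_iff_isUnit_det]
    simp only [T, Matrix.det_fin_three, isUnit_iff_ne_zero]
    simp [Matrix.vecHead, Matrix.vecTail]
    exact ⟨hu0, hv⟩
  refine ⟨hA, hT, fun n => ?_⟩
  have hTn : T ^ n = !![1, 0, 0; 0, u ^ n, 0; 0, 0, (-u^2 - u) ^ n] := by
    induction n with
    | zero => rw [pow_zero, hone]; norm_num
    | succ k ih =>
        rw [pow_succ, ih, show T = !![1, 0, 0; 0, u, 0; 0, 0, -u^2-u] from rfl,
          Matrix.mul_fin_three]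
        norm_num [pow_succ]
  have hun : (u : ℝ) ^ n ≠ 0 := pow_ne_zero _ hu0
  have hwn : ((-u - 1) : ℝ) ^ n ≠ 0 := pow_ne_zero _ hw
  have hvn : ((-u^2 - u) : ℝ) ^ n ≠ 0 := pow_ne_zero _ hv
  have hfac : (-u^2 - u : ℝ) ^ n = u ^ n * (-u - 1) ^ n := by
    rw [← mul_pow]; ring_nf
  have hTninv : (T ^ n)⁻¹ = !![1, 0, 0; 0, (u ^ n)⁻¹, 0; 0, 0, ((-u^2 - u) ^ n)⁻¹] := by
    apply Matrix.inv_eq_left_inv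
    rw [hTn, Matrix.mul_fin_three, hone]
    norm_num [inv_mul_cancel₀ hun, inv_mul_cancel₀ hvn]
  have hB : (T ^ n)⁻¹ * A * T ^ n =
      !![1, u ^ n, 0; 0, 1, (-u - 1) ^ n; 0, 0, 1] := by
    rw [hTninv, hTn, show A = !![1, 1, 0; 0, 1, 1; 0, 0, 1] from rfl,
      Matrix.mul_fin_three, Matrix.mul_fin_three]
    norm_num [hfac]
    have e1 : (u^n : ℝ)⁻¹ * u^n = 1 := inv_mul_cancel₀ hun
    have e2 : (u^n : ℝ)⁻¹ * (u^n * (-u-1)^n) = (-u-1)^n := inv_mul_cancel_left₀ hun _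
    have e3 : ((-u-1)^n : ℝ)⁻¹ * (u^n)⁻¹ * (u^n * (-u-1)^n) = 1 := by
      rw [mul_assoc, inv_mul_cancel_left₀ hun, inv_mul_cancel₀ hwn]
    rw [e3, e2, e1]
    exact ⟨⟨rfl, rfl⟩, rfl⟩
  have hBinv : ((T ^ n)⁻¹ * A * T ^ n)⁻¹ =
      !![1, -u ^ n, u ^ n * (-u - 1) ^ n; 0, 1, -(-u - 1) ^ n; 0, 0, 1] := by
    rw [hB]
    apply Matrix.inv_eq_left_inv
    rw [Matrix.mul_fin_three, hone]
    norm_num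
  rw [hBinv, hB, hAinv, show A = !![1, 1, 0; 0, 1, 1; 0, 0, 1] from rfl,
    Matrix.mul_fin_three, Matrix.mul_fin_three, Matrix.mul_fin_three]
  norm_num
  ring
end

section
/- For every n ≥ 0, the word [a, t⁻ⁿ·a·tⁿ] lies in the normal closure of R_Γ in the free group F on {a,s,t}; equivalently, [a, a^{tⁿ}] = 1 in Baumslag's group Γ. -/
section Aux

abbrev G : Type := F ⧸ Subgroup.normalClosure RΓ

def pr : F →* G := QuotientGroup.mk' _

def A : G := pr a
def S : G := pr s
def T : G := pr t

/-- `b i = a^{t^i}` in `Γ`. -/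
def b (i : ℕ) : G := (T ^ i)⁻¹ * A * T ^ i

lemma rel_one {r : F} (hr : r ∈ RΓ) : pr r = 1 :=
  (QuotientGroup.eq_one_iff r).mpr (Subgroup.subset_normalClosure hr)

lemma cmm_one_comm {x y : F} (h : pr (cmm x y) = 1) : pr x * pr y = pr y * pr x := by
  simp only [cmm, map_mul, map_inv] at h
  have := congrArg (fun z => pr y * pr x * z) h
  simpa [mul_assoc] using this

lemma hc1 : A * (T⁻¹ * A * T) = (T⁻¹ * A * T) * A := by
  have h := cmm_one_comm (rel_one (show cmm a (t⁻¹ * a * t) ∈ RΓ by left; rfl))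
  simpa [A, T, map_mul, map_inv] using h

lemma hc2 : S * T = T * S := by
  have h := cmm_one_comm (rel_one (show cmm s t ∈ RΓ by right; left; rfl))
  simpa [S, T] using h

lemma h3 : S⁻¹ * A * S = A * (T⁻¹ * A * T) := by
  have h := rel_one (show (s⁻¹ * a * s)⁻¹ * a * (t⁻¹ * a * t) ∈ RΓ by right; right; rfl)
  simp only [map_mul, map_inv] at h
  rw [mul_assoc, inv_mul_eq_one] at h
  simpa [A, S, T] using h

lemma conj_comm (g x y : G) (h : x * y = y * x) :
    (g⁻¹ * x * g) * (g⁻¹ * y * g) = (g⁻¹ * y * g) * (g⁻¹ * x * g) := by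
  have hx : x * (y * g) = y * (x * g) := by rw [← mul_assoc, h, mul_assoc]
  simp [mul_assoc, hx]

lemma b_succ (i : ℕ) : b (i + 1) = T⁻¹ * b i * T := by
  simp [b, pow_succ, mul_assoc, mul_inv_rev]

lemma b_zero : b 0 = A := by simp [b]

lemma hS : ∀ i, S⁻¹ * b i * S = b i * b (i + 1) := by
  intro i
  induction i with
  | zero => simpa [b_zero, b_succ] using h3
  | succ i ih =>
    have hST : S⁻¹ * T⁻¹ = T⁻¹ * S⁻¹ := by
      rw [← mul_inv_rev, ← mul_inv_rev, hc2]
    have hTS : T * S = S * T := hc2.symm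
    calc S⁻¹ * b (i + 1) * S = S⁻¹ * (T⁻¹ * b i * T) * S := by rw [b_succ]
      _ = (S⁻¹ * T⁻¹) * b i * (T * S) := by simp [mul_assoc]
      _ = (T⁻¹ * S⁻¹) * b i * (S * T) := by rw [hST, hTS]
      _ = T⁻¹ * (S⁻¹ * b i * S) * T := by simp [mul_assoc]
      _ = T⁻¹ * (b i * b (i + 1)) * T := by rw [ih]
      _ = (T⁻¹ * b i * T) * (T⁻¹ * b (i + 1) * T) := by simp [mul_assoc]
      _ = b (i + 1) * b (i + 2) := by rw [← b_succ, ← b_succ]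

lemma adj : ∀ i, b i * b (i + 1) = b (i + 1) * b i := by
  intro i
  induction i with
  | zero => simpa [b_zero, b_succ] using hc1
  | succ i ih =>
    have := conj_comm T _ _ ih
    simpa [← b_succ] using this

lemma key : ∀ n i, b i * b (i + n) = b (i + n) * b i := by
  intro n
  induction n using Nat.strong_induction_on with
  | _ n ih =>
    match n with
    | 0 => intro i; rfl
    | 1 => intro i; exact adj i
    | (m + 2) =>
      intro i
      -- x = b i, y = b (i+1), u = b (i+m+1), v = b (i+m+2)
      set x := b i with hx
      set y := b (i + 1) with hy
      set u := b (i + m + 1) with hu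
      set v := b (i + m + 2) with hv
      have hxu : x * u = u * x := by
        have h := ih (m + 1) (by omega) i
        rwa [show i + (m + 1) = i + m + 1 by omega] at h
      have hyu : y * u = u * y := by
        have h := ih m (by omega) (i + 1)
        rwa [show i + 1 + m = i + m + 1 by omega] at h
      have hyv : y * v = v * y := by
        have h := ih (m + 1) (by omega) (i + 1)
        rwa [show i + 1 + (m + 1) = i + m + 2 by omega] at h
      have huv : u * v = v * u := by
        have h := adj (i + m + 1)
        rwa [show i + m + 1 + 1 = i + m + 2 by omega] at h
      -- conjugate hxu by S
      have hcomb : (x * y) * (u * v) = (u * v) * (x * y) := by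
        have := conj_comm S _ _ hxu
        rw [hS i, hS (i + m + 1),
          show i + m + 1 + 1 = i + m + 2 by omega] at this
        exact this
      -- derive x * v = v * x
      have e1 : x * (y * (u * v)) = u * (v * (x * y)) := by
        have := hcomb
        simpa [mul_assoc] using this
      have e2 : y * (u * v) = u * (v * y) := by
        rw [← mul_assoc, hyu, mul_assoc, hyv]
      rw [e2, ← mul_assoc, hxu, mul_assoc] at e1
      have e3 : x * (v * y) = v * (x * y) := mul_left_cancel e1
      have e4 : (x * v) * y = (v * x) * y := by
        rw [mul_assoc, mul_assoc]; exact e3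
      rw [show i + (m + 2) = i + m + 2 by omega]
      exact mul_right_cancel e4

end Aux

/-- For every `n ≥ 0`, the word `[a, t⁻ⁿ·a·tⁿ]` lies in the normal closure of the
relators of Baumslag's presentation; equivalently, `[a, a^{tⁿ}] = 1` in Baumslag's
group `Γ`. -/
theorem commutator_in_normal_closure :
    ∀ n : ℕ, cmm a ((t ^ n)⁻¹ * a * t ^ n) ∈ Subgroup.normalClosure RΓ := by
  intro n
  rw [← QuotientGroup.eq_one_iff]
  have hcomm : A * b n = b n * A := by simpa [b_zero] using key n 0
  show pr (cmm a ((t ^ n)⁻¹ * a * t ^ n)) = 1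
  simp only [cmm, map_mul, map_inv, map_pow]
  have hb : b n = ((pr t) ^ n)⁻¹ * pr a * (pr t) ^ n := rfl
  have hA : A = pr a := rfl
  rw [hA, hb] at hcomm
  rw [mul_assoc, mul_assoc, hcomm]
  simp [mul_assoc]
end

section
/- For every n ≥ 1, the word [a, t⁻ⁿ·a·tⁿ] freely equals, in the free group F on {a,s,t}, a product of at most 4ⁿ conjugates of elements of R_Γ^{±1}; that is, C(n) := Area([a, a^{tⁿ}]) ≤ 4ⁿ. -/
namespace BG

/-! ### A list-based certificate calculus -/

/-- `x` is a conjugate of a relator or of an inverse of a relator. -/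
def IsRel (x : F) : Prop :=
  ∃ (u r : F) (ε : ℤ), r ∈ RΓ ∧ (ε = 1 ∨ ε = -1) ∧ x = u * r ^ ε * u⁻¹

/-- `w` is a product of a list of `c` conjugates of relators±1. -/
def Crt (c : ℕ) (w : F) : Prop :=
  ∃ L : List F, L.length = c ∧ (∀ x ∈ L, IsRel x) ∧ w = L.prod

theorem Crt.isConjProd {c : ℕ} {w : F} (h : Crt c w) : IsConjProd RΓ c w := by
  obtain ⟨L, hlen, hrel, hw⟩ := h
  subst hlen
  have H : ∀ i : Fin L.length, IsRel L[i] := fun i => hrel _ (List.getElem_mem _)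
  choose u r ε hr hε hx using H
  refine ⟨u, r, ε, hr, hε, ?_⟩
  rw [hw]
  congr 1
  refine List.ext_getElem (by simp) ?_
  intro i h1 h2
  rw [List.getElem_ofFn]
  exact hx ⟨i, h1⟩

theorem Crt.one : Crt 0 1 := ⟨[], rfl, by simp, by simp⟩

theorem Crt.congr {c : ℕ} {w v : F} (h : Crt c w) (e : w = v) : Crt c v := e ▸ h

theorem Crt.cost {c d : ℕ} {w : F} (h : Crt c w) (e : c = d) : Crt d w := e ▸ h

theorem Crt.mul {c d : ℕ} {w v : F} (h1 : Crt c w) (h2 : Crt d v) : Crt (c + d) (w * v) := by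
  obtain ⟨L1, e1, m1, p1⟩ := h1
  obtain ⟨L2, e2, m2, p2⟩ := h2
  refine ⟨L1 ++ L2, by simp [e1, e2], ?_, by simp [p1, p2]⟩
  intro x hx
  rcases List.mem_append.mp hx with h | h
  · exact m1 x h
  · exact m2 x h

theorem IsRel.inv {x : F} (h : IsRel x) : IsRel x⁻¹ := by
  obtain ⟨u, r, ε, hr, hε, rfl⟩ := h
  refine ⟨u, r, -ε, hr, by omega, by group⟩

theorem Crt.inv {c : ℕ} {w : F} (h : Crt c w) : Crt c w⁻¹ := by
  obtain ⟨L, e, m, p⟩ := h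
  refine ⟨(L.map fun x => x⁻¹).reverse, by simp [e], ?_, ?_⟩
  · intro x hx
    simp only [List.mem_reverse, List.mem_map] at hx
    obtain ⟨y, hy, rfl⟩ := hx
    exact (m y hy).inv
  · rw [p]; exact List.prod_inv_reverse L

theorem conj_prod {g : F} : ∀ L : List F, (L.map fun x => g * x * g⁻¹).prod = g * L.prod * g⁻¹
  | [] => by simp
  | x :: xs => by
    simp only [List.map_cons, List.prod_cons, conj_prod xs]; group

theorem Crt.conj {c : ℕ} (g : F) {w : F} (h : Crt c w) : Crt c (g * w * g⁻¹) := by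
  obtain ⟨L, e, m, p⟩ := h
  refine ⟨L.map fun x => g * x * g⁻¹, by simp [e], ?_, ?_⟩
  · intro x hx
    simp only [List.mem_map] at hx
    obtain ⟨y, hy, rfl⟩ := hx
    obtain ⟨u, r, ε, hr, hε, rfl⟩ := m y hy
    exact ⟨g * u, r, ε, hr, hε, by group⟩
  · rw [p, conj_prod]

/-! ### Equality-with-cost relation -/

/-- `w` and `v` differ (in the free group) by a product of `c` conjugates of relators±1. -/
def Ceq (c : ℕ) (w v : F) : Prop := Crt c (w * v⁻¹)

theorem Ceq.congr {c : ℕ} {w v w' v' : F} (h : Ceq c w v)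
    (e : w * v⁻¹ = w' * v'⁻¹) : Ceq c w' v' := Crt.congr h e

theorem Ceq.cost {c d : ℕ} {w v : F} (h : Ceq c w v) (e : c = d) : Ceq d w v := e ▸ h

theorem Ceq.refl (w : F) : Ceq 0 w w := Crt.congr Crt.one (by group)

theorem Ceq.single {w v : F} (u r : F) (ε : ℤ) (hr : r ∈ RΓ) (hε : ε = 1 ∨ ε = -1)
    (e : w * v⁻¹ = u * r ^ ε * u⁻¹) : Ceq 1 w v := by
  refine ⟨[u * r ^ ε * u⁻¹], rfl, ?_, by simpa using e⟩
  intro x hx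
  rcases List.mem_singleton.mp hx with rfl
  exact ⟨u, r, ε, hr, hε, rfl⟩

theorem Ceq.symm {c : ℕ} {w v : F} (h : Ceq c w v) : Ceq c v w :=
  Crt.congr (Crt.inv h) (by group)

theorem Ceq.trans {c d : ℕ} {w v x : F} (h1 : Ceq c w v) (h2 : Ceq d v x) :
    Ceq (c + d) w x := Crt.congr (Crt.mul h1 h2) (by group)

theorem Ceq.mul {c d : ℕ} {w v w' v' : F} (h1 : Ceq c w w') (h2 : Ceq d v v') :
    Ceq (c + d) (w * v) (w' * v') := by
  have := Crt.mul (Crt.conj w (h2 : Crt d (v * v'⁻¹))) (h1 : Crt c (w * w'⁻¹))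
  exact Crt.congr (this.cost (Nat.add_comm _ _)) (by group)

theorem Ceq.inv {c : ℕ} {w v : F} (h : Ceq c w v) : Ceq c w⁻¹ v⁻¹ :=
  Crt.congr (Crt.conj w⁻¹ (Crt.inv h)) (by group)

theorem Ceq.toCrt {c : ℕ} {w : F} (h : Ceq c w 1) : Crt c w := Crt.congr h (by group)

theorem Ceq.ofCrt {c : ℕ} {w : F} (h : Crt c w) : Ceq c w 1 := Crt.congr h (by group)

theorem Ceq.mul1 {c d : ℕ} {w v : F} (h1 : Ceq c w 1) (h2 : Ceq d v 1) :
    Ceq (c + d) (w * v) 1 := (h1.mul h2).congr (by group)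

theorem Ceq.inv1 {c : ℕ} {w : F} (h : Ceq c w 1) : Ceq c w⁻¹ 1 :=
  h.inv.congr (by group)

theorem Ceq.conjL {c : ℕ} (g : F) {w : F} (h : Ceq c w 1) : Ceq c (g * w * g⁻¹) 1 :=
  Ceq.ofCrt (Crt.conj g h.toCrt)

theorem Ceq.conjR {c : ℕ} (g : F) {w : F} (h : Ceq c w 1) : Ceq c (g⁻¹ * w * g) 1 :=
  Ceq.ofCrt (Crt.congr (Crt.conj g⁻¹ h.toCrt) (by group))

/-! ### Relators -/

theorem r1_mem : cmm a (t⁻¹ * a * t) ∈ RΓ := Set.mem_insert _ _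
theorem r2_mem : cmm s t ∈ RΓ := Set.mem_insert_of_mem _ (Set.mem_insert _ _)
theorem r3_mem : (s⁻¹ * a * s)⁻¹ * a * (t⁻¹ * a * t) ∈ RΓ :=
  Set.mem_insert_of_mem _ (Set.mem_insert_of_mem _ rfl)

/-- `b n = a^{tⁿ}`. -/
def bb (n : ℕ) : F := (t ^ n)⁻¹ * a * t ^ n

/-! ### The s-band primitives: conjugation by `s` acts as `a ↦ a·a^t`, `t ↦ t`. -/

theorem Ba : Ceq 1 (s⁻¹ * a * s) (a * bb 1) :=
  Ceq.single (s⁻¹ * a * s) ((s⁻¹ * a * s)⁻¹ * a * (t⁻¹ * a * t)) (-1) r3_mem (Or.inr rfl)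
    (by simp only [bb]; group)

theorem Bt : Ceq 1 (s⁻¹ * t * s) t :=
  Ceq.single t (cmm s t) (-1) r2_mem (Or.inr rfl) (by simp only [cmm]; group)

theorem Bpow : ∀ n : ℕ, Ceq n (s⁻¹ * t ^ n * s) (t ^ n)
  | 0 => Crt.congr Crt.one (by group)
  | n + 1 => ((Bpow n).mul Bt).congr (by group)

theorem Bb (n : ℕ) : Ceq (2 * n + 1) (s⁻¹ * bb n * s) (bb n * bb (n + 1)) :=
  ((((Bpow n).inv.mul Ba).mul (Bpow n)).congr (by simp only [bb]; group)).cost (by omega)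

theorem BX (n : ℕ) :
    Ceq (4 * n + 4) (s⁻¹ * cmm a (bb n) * s) (cmm (a * bb 1) (bb n * bb (n + 1))) :=
  ((((Ba.inv.mul (Bb n).inv).mul Ba).mul (Bb n)).congr
    (by simp only [bb, cmm]; group)).cost (by omega)

/-! ### Base cases -/

theorem C0 : Ceq 0 (cmm a (bb 0)) 1 := Crt.congr Crt.one (by simp only [cmm, bb]; group)

theorem C1 : Ceq 1 (cmm a (bb 1)) 1 :=
  Ceq.single 1 (cmm a (t⁻¹ * a * t)) 1 r1_mem (Or.inl rfl) (by simp only [cmm, bb]; group)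

/-! ### The inductive step -/

theorem step (n c0 c1 : ℕ) (h0 : Ceq c0 (cmm a (bb n)) 1)
    (h1 : Ceq c1 (cmm a (bb (n + 1))) 1) :
    Ceq (3 * c1 + c0 + 4 * n + 8) (cmm a (bb (n + 2))) 1 := by
  have hband : Ceq ((4 * (n + 1) + 4) + c1) (cmm (a * bb 1) (bb (n + 1) * bb (n + 2))) 1 :=
    (BX (n + 1)).symm.trans (h1.conjR s)
  have hB : Ceq c1 (cmm (bb 1) (bb (n + 2))) 1 :=
    (h1.conjR t).congr (by simp only [cmm, bb]; group)
  have hBY : Ceq c0 (cmm (bb 1) (bb (n + 1))) 1 :=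
    (h0.conjR t).congr (by simp only [cmm, bb]; group)
  have big : Ceq ((((4 * (n + 1) + 4) + c1) + c0 + c1) + c1)
      ((bb 1 * (cmm (a * bb 1) (bb (n + 1) * bb (n + 2)) *
          ((bb (n + 2))⁻¹ * (cmm (bb 1) (bb (n + 1)))⁻¹ * bb (n + 2)) *
          (cmm (bb 1) (bb (n + 2)))⁻¹) * (bb 1)⁻¹) *
        ((bb (n + 2))⁻¹ * (cmm a (bb (n + 1)))⁻¹ * bb (n + 2))) 1 :=
    Ceq.mul1 (Ceq.conjL (bb 1) (Ceq.mul1 (Ceq.mul1 hband (Ceq.conjR (bb (n + 2)) hBY.inv1))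
      hB.inv1)) (Ceq.conjR (bb (n + 2)) h1.inv1)
  exact (big.congr (by simp only [cmm]; group)).cost (by omega)

/-! ### The cost sequence -/

def c : ℕ → ℕ
  | 0 => 0
  | 1 => 1
  | (n + 2) => 3 * c (n + 1) + c n + 4 * n + 8

theorem main : ∀ n, Ceq (c n) (cmm a (bb n)) 1 := by
  have key : ∀ n, Ceq (c n) (cmm a (bb n)) 1 ∧ Ceq (c (n + 1)) (cmm a (bb (n + 1))) 1 := by
    intro n
    induction n with
    | zero => exact ⟨C0, C1⟩
    | succ k ih => exact ⟨ih.2, step k (c k) (c (k + 1)) ih.1 ih.2⟩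
  exact fun n => (key n).1

theorem lin : ∀ m : ℕ, 4 * m + 12 ≤ 3 * 4 ^ (m + 1) := by
  intro m
  induction m with
  | zero => norm_num
  | succ k ih =>
    have hx : (4:ℕ) ^ (k + 2) = 4 * 4 ^ (k + 1) := by ring
    have h1 : 1 ≤ (4:ℕ) ^ (k + 1) := Nat.one_le_pow _ _ (by norm_num)
    omega

theorem cb : ∀ n : ℕ, c (n + 1) ≤ 4 ^ (n + 1) ∧ c (n + 2) ≤ 4 ^ (n + 2) := by
  intro n
  induction n with
  | zero => exact ⟨by norm_num [c], by norm_num [c]⟩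
  | succ k ih =>
    refine ⟨ih.2, ?_⟩
    show c (k + 3) ≤ 4 ^ (k + 3)
    have e : c (k + 3) = 3 * c (k + 2) + c (k + 1) + 4 * (k + 1) + 8 := rfl
    have l := lin k
    have hx : (4:ℕ) ^ (k + 3) = 4 * 4 ^ (k + 2) := by ring
    have hx2 : (4:ℕ) ^ (k + 2) = 4 * 4 ^ (k + 1) := by ring
    have i1 := ih.1
    have i2 := ih.2
    omega

end BG

/-- Lemma 3.1 (upper bound): for every `n ≥ 1`, the word `[a, t⁻ⁿ·a·tⁿ]` freely equals
a product of at most `4ⁿ` conjugates of relators of Baumslag's presentation or their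
inverses; that is, `C(n) = Area([a, a^{tⁿ}]) ≤ 4ⁿ`. -/
theorem commutator_area_at_most_four_pow :
    ∀ n : ℕ, 1 ≤ n →
      (∃ N : ℕ, N ≤ 4 ^ n ∧ IsConjProd RΓ N (cmm a ((t ^ n)⁻¹ * a * t ^ n))) ∧
      area RΓ (cmm a ((t ^ n)⁻¹ * a * t ^ n)) ≤ 4 ^ n := by
  intro n hn
  obtain ⟨m, rfl⟩ : ∃ m, n = m + 1 := ⟨n - 1, by omega⟩
  have hq : BG.Crt (BG.c (m + 1)) (cmm a (BG.bb (m + 1))) := (BG.main (m + 1)).toCrt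
  have hcp : IsConjProd RΓ (BG.c (m + 1)) (cmm a ((t ^ (m + 1))⁻¹ * a * t ^ (m + 1))) :=
    BG.Crt.isConjProd hq
  have hb : BG.c (m + 1) ≤ 4 ^ (m + 1) := (BG.cb m).1
  exact ⟨⟨BG.c (m + 1), hb, hcp⟩, le_trans (Nat.sInf_le hcp) hb⟩
end

section
/- Let f(x) = Σ_{i=0}^n c_i·x^i ∈ ℤ[x] with |c_i| ≤ c for all i, and let g(x) = f(x+1) = Σ_{i=0}^n d_i·x^i. Then the element [[a]]_s^f · ([[a]]_t^g)⁻¹ of the free group F on {a,s,t} lies in the normal closure of R_Γ (i.e. [[a]]_s^{f(x)} = [[a]]_t^{f(x+1)} in Γ), and its area is at most c²·4^{n+1}. -/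
/-- For a polynomial `f = Σ_{i=0}^n c_i·x^i ∈ ℤ[x]`, the word
`[[a]]_s^f = ∏_{i=0}^n s^{-i}·a^{c_i}·s^{i}` in the free group `F`. -/
def wordS (f : Polynomial ℤ) (n : ℕ) : F :=
  ((List.range (n + 1)).map (fun i => (s ^ i)⁻¹ * a ^ f.coeff i * s ^ i)).prod

/-- For a polynomial `f = Σ_{i=0}^n c_i·x^i ∈ ℤ[x]`, the word
`[[a]]_t^f = ∏_{i=0}^n t^{-i}·a^{c_i}·t^{i}` in the free group `F`. -/
def wordT (f : Polynomial ℤ) (n : ℕ) : F :=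
  ((List.range (n + 1)).map (fun i => (t ^ i)⁻¹ * a ^ f.coeff i * t ^ i)).prod

/-- An element is a conjugate of a relator or its inverse. -/
def IsConjRel (x : F) : Prop :=
  ∃ (u r : F) (ε : ℤ), r ∈ RΓ ∧ (ε = 1 ∨ ε = -1) ∧ x = u * r ^ ε * u⁻¹

/-- `Cost k A B`: `A * B⁻¹` is a product of at most `k` conjugates of relators. -/
def Cost (k : ℕ) (A B : F) : Prop :=
  ∃ l : List F, l.length ≤ k ∧ (∀ x ∈ l, IsConjRel x) ∧ A * B⁻¹ = l.prod

theorem cost_of_eq {A B : F} (h : A = B) (k : ℕ) : Cost k A B :=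
  ⟨[], by simp, by simp, by simp [h]⟩

theorem cost_refl (A : F) (k : ℕ) : Cost k A A := cost_of_eq rfl k

theorem cost_mono {k m : ℕ} (h : k ≤ m) {A B : F} (hr : Cost k A B) : Cost m A B := by
  obtain ⟨l, hl, hP, hprod⟩ := hr
  exact ⟨l, hl.trans h, hP, hprod⟩

theorem conj_list_prod (g : F) (l : List F) :
    (l.map (fun x => g * x * g⁻¹)).prod = g * l.prod * g⁻¹ := by
  induction l with
  | nil => simp
  | cons x xs ih => simp [ih]

theorem cost_conj {k : ℕ} {A B : F} (g : F) (h : Cost k A B) :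
    Cost k (g * A * g⁻¹) (g * B * g⁻¹) := by
  obtain ⟨l, hl, hP, hprod⟩ := h
  refine ⟨l.map (fun x => g * x * g⁻¹), by simpa using hl, ?_, ?_⟩
  · intro x hx
    simp only [List.mem_map] at hx
    obtain ⟨y, hy, rfl⟩ := hx
    obtain ⟨u, r, ε, hr, hε, rfl⟩ := hP y hy
    exact ⟨g * u, r, ε, hr, hε, by group⟩
  · rw [conj_list_prod, ← hprod]; group

theorem cost_trans {k m : ℕ} {A B C : F} (h1 : Cost k A B) (h2 : Cost m B C) :
    Cost (k + m) A C := by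
  obtain ⟨l1, hl1, hP1, hprod1⟩ := h1
  obtain ⟨l2, hl2, hP2, hprod2⟩ := h2
  refine ⟨l1 ++ l2, by simpa using Nat.add_le_add hl1 hl2, ?_, ?_⟩
  · intro x hx; rcases List.mem_append.1 hx with h | h
    exacts [hP1 x h, hP2 x h]
  · rw [List.prod_append, ← hprod1, ← hprod2]; group

theorem cost_symm {k : ℕ} {A B : F} (h : Cost k A B) : Cost k B A := by
  obtain ⟨l, hl, hP, hprod⟩ := h
  refine ⟨(l.map (fun x => x⁻¹)).reverse, by simpa using hl, ?_, ?_⟩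
  · intro x hx
    simp only [List.mem_reverse, List.mem_map] at hx
    obtain ⟨y, hy, rfl⟩ := hx
    obtain ⟨u, r, ε, hr, hε, rfl⟩ := hP y hy
    refine ⟨u, r, -ε, hr, by omega, by group⟩
  · rw [← List.prod_inv_reverse, ← hprod]; group

theorem cost_mul {k m : ℕ} {A B C D : F} (h1 : Cost k A B) (h2 : Cost m C D) :
    Cost (k + m) (A * C) (B * D) := by
  have e1 : Cost m (A * C) (A * D) := by
    have := cost_conj A h2
    obtain ⟨l, hl, hP, hprod⟩ := this
    exact ⟨l, hl, hP, by rw [← hprod]; group⟩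
  have e2 : Cost k (A * D) (B * D) := by
    obtain ⟨l, hl, hP, hprod⟩ := h1
    exact ⟨l, hl, hP, by rw [← hprod]; group⟩
  simpa [Nat.add_comm] using cost_trans e1 e2

theorem cost_inv' {k : ℕ} {A B : F} (h : Cost k A B) : Cost k B⁻¹ A⁻¹ := by
  have h0 : Cost k (A * B⁻¹) 1 := by
    obtain ⟨l, hl, hP, hprod⟩ := h
    exact ⟨l, hl, hP, by rw [← hprod]; group⟩
  have h1 := cost_conj A⁻¹ h0
  obtain ⟨l, hl, hP, hprod⟩ := h1
  exact ⟨l, hl, hP, by rw [← hprod]; group⟩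

theorem cost_inv {k : ℕ} {A B : F} (h : Cost k A B) : Cost k A⁻¹ B⁻¹ :=
  cost_inv' (cost_symm h)

theorem cost_single {A B : F} (u r : F) (ε : ℤ) (hr : r ∈ RΓ) (hε : ε = 1 ∨ ε = -1)
    (h : A * B⁻¹ = u * r ^ ε * u⁻¹) : Cost 1 A B :=
  ⟨[u * r ^ ε * u⁻¹], by simp, by rintro x hx; simp at hx; exact ⟨u, r, ε, hr, hε, hx⟩,
    by simpa using h⟩

theorem cost_pow {k : ℕ} {A B : F} (h : Cost k A B) (n : ℕ) :
    Cost (n * k) (A ^ n) (B ^ n) := by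
  induction n with
  | zero => exact cost_of_eq (by simp) _
  | succ m ih =>
    have := cost_mul ih h
    rw [pow_succ, pow_succ]
    exact cost_mono (by ring_nf; omega) this

theorem cost_zpow {k : ℕ} {A B : F} (h : Cost k A B) (e : ℤ) :
    Cost (e.natAbs * k) (A ^ e) (B ^ e) := by
  rcases Int.natAbs_eq e with he | he
  · rw [he, zpow_natCast, zpow_natCast]; exact cost_pow h _
  · have h2 := cost_inv (cost_pow h e.natAbs)
    rw [← zpow_natCast A, ← zpow_natCast B, ← zpow_neg, ← zpow_neg, ← he] at h2
    simpa using h2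

-- base relations
theorem cost_st : Cost 1 (s⁻¹ * t) (t * s⁻¹) := by
  refine cost_single t (cmm s t) (-1) (by simp [RΓ]) (by simp) ?_
  simp only [cmm]; group

theorem cost_as : Cost 1 (s⁻¹ * a * s) (a * (t⁻¹ * a * t)) := by
  refine cost_single (s⁻¹ * a * s) ((s⁻¹ * a * s)⁻¹ * a * (t⁻¹ * a * t)) (-1)
    (by simp [RΓ]) (by simp) ?_
  group

theorem cost_comm_aat : Cost 1 (a * (t⁻¹ * a * t)) ((t⁻¹ * a * t) * a) := by
  refine cost_single ((t⁻¹ * a * t) * a) (cmm a (t⁻¹ * a * t)) 1 (by simp [RΓ]) (by simp) ?_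
  simp only [cmm]; group

-- transport along equalities
theorem cost_congr {k : ℕ} {A B A' B' : F} (h : Cost k A B) (hA : A = A') (hB : B = B') :
    Cost k A' B' := hA ▸ hB ▸ h

theorem cost_comm_pow_right {x y : F} (hxy : Cost 1 (x * y) (y * x)) (n : ℕ) :
    Cost n (x * y ^ n) (y ^ n * x) := by
  induction n with
  | zero => exact cost_of_eq (by group) _
  | succ m ih =>
    have h1 : Cost (m + 1) (x * y ^ m * y) (y ^ m * (y * x)) :=
      cost_trans (cost_mul ih (cost_refl y 0))
        (cost_congr (cost_mul (cost_refl (y ^ m) 0) hxy) (by group) rfl)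
    refine cost_congr h1 ?_ ?_
    · rw [pow_succ]; group
    · rw [pow_succ]; group

theorem cost_comm_pow_pow {x y : F} (hxy : Cost 1 (x * y) (y * x)) (m n : ℕ) :
    Cost (m * n) (x ^ m * y ^ n) (y ^ n * x ^ m) := by
  induction m with
  | zero => exact cost_of_eq (by group) _
  | succ k ih =>
    have h1 : Cost (0 + n) (x ^ k * (x * y ^ n)) (x ^ k * y ^ n * x) :=
      cost_congr (cost_mul (cost_refl (x ^ k) 0) (cost_comm_pow_right hxy n)) rfl (by group)
    have h2 : Cost (k * n + 0) (x ^ k * y ^ n * x) (y ^ n * x ^ k * x) :=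
      cost_mul ih (cost_refl x 0)
    refine cost_mono (by ring_nf; omega) (cost_congr (cost_trans h1 h2) ?_ ?_)
    · rw [pow_succ]; group
    · rw [pow_succ]; group

theorem cost_comm_inv_right {x y : F} (hxy : Cost 1 (x * y) (y * x)) :
    Cost 1 (x * y⁻¹) (y⁻¹ * x) := by
  have h := cost_mul (cost_mul (cost_refl y⁻¹ 0) (cost_symm hxy)) (cost_refl y⁻¹ 0)
  refine cost_congr (cost_mono ?_ h) ?_ ?_
  · omega
  · group
  · group

theorem cost_mul_pow_comm {x y : F} (hxy : Cost 1 (x * y) (y * x)) (n : ℕ) :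
    Cost (n * n) ((x * y) ^ n) (x ^ n * y ^ n) := by
  induction n with
  | zero => exact cost_of_eq (by group) _
  | succ m ih =>
    have h1 := cost_mul ih (cost_refl (x * y) 0)
    have h2 := cost_mul (cost_mul (cost_refl (x ^ m) 0)
      (cost_symm (cost_comm_pow_right hxy m))) (cost_refl y 0)
    have h3 := cost_trans (cost_congr h1 rfl (by group)) h2
    refine cost_mono ?_ (cost_congr h3 ?_ ?_)
    · ring_nf; omega
    · rw [pow_succ]
    · rw [pow_succ x, pow_succ y]; group

theorem cost_mul_zpow_comm {x y : F} (hxy : Cost 1 (x * y) (y * x)) (e : ℤ) :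
    Cost (2 * e.natAbs ^ 2) ((x * y) ^ e) (x ^ e * y ^ e) := by
  have hinv : Cost 1 (x⁻¹ * y⁻¹) (y⁻¹ * x⁻¹) := by
    have h := cost_inv hxy
    refine cost_symm (cost_congr h ?_ ?_) <;> group
  rcases Int.natAbs_eq e with he | he <;> rw [he] <;>
    simp only [Int.natAbs_neg, Int.natAbs_natCast]
  · rw [zpow_natCast, zpow_natCast, zpow_natCast]
    exact cost_mono (by nlinarith) (cost_mul_pow_comm hxy e.natAbs)
  · set n := e.natAbs
    rw [zpow_neg, zpow_neg, zpow_neg, zpow_natCast, zpow_natCast, zpow_natCast]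
    have h1 : Cost (n * n) (((x * y) ^ n)⁻¹) ((y ^ n)⁻¹ * (x ^ n)⁻¹) :=
      cost_congr (cost_inv (cost_mul_pow_comm hxy n)) rfl (by rw [mul_inv_rev])
    have h2 : Cost (n * n) ((y ^ n)⁻¹ * (x ^ n)⁻¹) ((x ^ n)⁻¹ * (y ^ n)⁻¹) :=
      cost_congr (cost_comm_pow_pow (cost_symm hinv) n n)
        (by rw [inv_pow, inv_pow]) (by rw [inv_pow, inv_pow])
    exact cost_mono (by nlinarith) (cost_trans h1 h2)

-- ## Words and blocks
def Blk (i : ℕ) (e : ℤ) : F := (t ^ i)⁻¹ * a ^ e * t ^ i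
def SBlk (i : ℕ) (e : ℤ) : F := (s ^ i)⁻¹ * a ^ e * s ^ i

def WTd (d : ℕ → ℤ) (m : ℕ) : F := ((List.range m).map (fun i => Blk i (d i))).prod
def WSd (d : ℕ → ℤ) (m : ℕ) : F := ((List.range m).map (fun i => SBlk i (d i))).prod

theorem wordS_eq (f : Polynomial ℤ) (n : ℕ) : wordS f n = WSd f.coeff (n + 1) := rfl
theorem wordT_eq (f : Polynomial ℤ) (n : ℕ) : wordT f n = WTd f.coeff (n + 1) := rfl

theorem WTd_congr {d d' : ℕ → ℤ} (m : ℕ) (h : ∀ j < m, d j = d' j) :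
    WTd d m = WTd d' m := by
  unfold WTd
  congr 1
  refine List.map_congr_left (fun i hi => ?_)
  rw [h i (List.mem_range.1 hi)]

theorem WSd_congr {d d' : ℕ → ℤ} (m : ℕ) (h : ∀ j < m, d j = d' j) :
    WSd d m = WSd d' m := by
  unfold WSd
  congr 1
  refine List.map_congr_left (fun i hi => ?_)
  rw [h i (List.mem_range.1 hi)]

theorem WTd_succ (d : ℕ → ℤ) (m : ℕ) : WTd d (m + 1) = WTd d m * Blk m (d m) := by
  rw [WTd, List.range_succ, List.map_append, List.prod_append]; simp [WTd]

theorem Blk_add (i : ℕ) (x y : ℤ) : Blk i (x + y) = Blk i x * Blk i y := by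
  unfold Blk; rw [zpow_add]; group

theorem Blk_zero_eq (e : ℤ) : Blk 0 e = a ^ e := by simp [Blk]

theorem WSd_head (d : ℕ → ℤ) (m : ℕ) :
    WSd d (m + 1) = a ^ (d 0) * (s⁻¹ * WSd (fun i => d (i + 1)) m * s) := by
  rw [WSd, List.range_succ_eq_map, List.map_cons, List.prod_cons, List.map_map]
  have h1 : (fun i => SBlk i (d i)) ∘ Nat.succ
      = (fun x => s⁻¹ * x * s⁻¹⁻¹) ∘ (fun i => SBlk i (d (i + 1))) := by
    funext i
    simp only [Function.comp, SBlk, Nat.succ_eq_add_one]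
    rw [pow_succ]; group
  rw [h1, ← List.map_map, conj_list_prod s⁻¹]
  have h2 : SBlk 0 (d 0) = a ^ (d 0) := by simp [SBlk]
  rw [h2, ← WSd]
  group

theorem a_mul_WTd (x : ℤ) (d : ℕ → ℤ) (m : ℕ) :
    a ^ x * WTd d (m + 1) = WTd (fun j => if j = 0 then x + d j else d j) (m + 1) := by
  rw [WTd, WTd, List.range_succ_eq_map]
  simp only [List.map_cons, List.prod_cons, List.map_map]
  have h1 : (fun i => Blk i (if i = 0 then x + d i else d i)) ∘ Nat.succ
      = (fun i => Blk i (d i)) ∘ Nat.succ := by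
    funext i; simp [Function.comp]
  rw [h1]
  simp only [if_pos rfl, Blk_zero_eq, zpow_add, if_true]
  group

-- interleaving identity
theorem interleave (d : ℕ → ℤ) (m : ℕ) :
    ((List.range m).map (fun i => Blk i (d i) * Blk (i + 1) (d i))).prod
      = WTd (fun j => d j + if j = 0 then 0 else d (j - 1)) m
        * Blk m (if m = 0 then 0 else d (m - 1)) := by
  induction m with
  | zero => simp [WTd, Blk]
  | succ k ih =>
    rw [List.range_succ, List.map_append, List.prod_append, ih,
      WTd_succ]
    simp only [List.map_cons, List.map_nil, List.prod_cons, List.prod_nil, mul_one,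
      Nat.succ_ne_zero, if_false, Nat.add_sub_cancel]
    have hsplit : Blk k (d k + if k = 0 then 0 else d (k - 1))
        = Blk k (if k = 0 then 0 else d (k - 1)) * Blk k (d k) := by
      rw [← Blk_add, add_comm]
    rw [hsplit]
    group


-- s versus powers of t
theorem cost_spow (i : ℕ) : Cost i (s⁻¹ * t ^ i) (t ^ i * s⁻¹) :=
  cost_comm_pow_right cost_st i

theorem cost_spow_inv (i : ℕ) : Cost i (s⁻¹ * (t ^ i)⁻¹) ((t ^ i)⁻¹ * s⁻¹) := by
  have h := cost_comm_pow_right (cost_comm_inv_right cost_st) i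
  refine cost_congr h ?_ ?_ <;> rw [inv_pow]

theorem cost_block (i : ℕ) (e : ℤ) :
    Cost (2 * i + 3 * e.natAbs ^ 2) (s⁻¹ * Blk i e * s) (Blk i e * Blk (i + 1) e) := by
  have h1 : Cost i (s⁻¹ * (t ^ i)⁻¹ * s) ((t ^ i)⁻¹) := by
    have h := cost_mul (cost_spow_inv i) (cost_refl s 0)
    exact cost_mono (by omega) (cost_congr h rfl (by group))
  have h2 : Cost i (s⁻¹ * t ^ i * s) (t ^ i) := by
    have h := cost_mul (cost_spow i) (cost_refl s 0)
    exact cost_mono (by omega) (cost_congr h rfl (by group))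
  have h3 : Cost (e.natAbs * 1) (s⁻¹ * a ^ e * s) ((a * (t⁻¹ * a * t)) ^ e) := by
    refine cost_congr (cost_zpow cost_as e) ?_ rfl
    rw [show s⁻¹ * a * s = s⁻¹ * a * s⁻¹⁻¹ by group, conj_zpow]
    group
  have h4 : Cost (2 * e.natAbs ^ 2) ((a * (t⁻¹ * a * t)) ^ e) (a ^ e * (t⁻¹ * a ^ e * t)) := by
    refine cost_congr (cost_mul_zpow_comm cost_comm_aat e) rfl ?_
    rw [show t⁻¹ * a * t = t⁻¹ * a * t⁻¹⁻¹ by group, conj_zpow]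
    group
  have h34 := cost_trans h3 h4
  have htot := cost_mul h1 (cost_mul h34 h2)
  refine cost_mono ?_ (cost_congr htot ?_ ?_)
  · have : e.natAbs ≤ e.natAbs ^ 2 := by nlinarith
    omega
  · unfold Blk; group
  · unfold Blk; rw [pow_succ]; group

-- cost of conjugating WTd by s
theorem cost_sconj (d : ℕ → ℤ) (m : ℕ) :
    Cost (∑ i ∈ Finset.range m, (2 * i + 3 * (d i).natAbs ^ 2))
      (s⁻¹ * WTd d m * s)
      (((List.range m).map (fun i => Blk i (d i) * Blk (i + 1) (d i))).prod) := by
  induction m with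
  | zero => exact cost_of_eq (by simp [WTd]) _
  | succ k ih =>
    rw [Finset.sum_range_succ, List.range_succ, List.map_append, List.prod_append]
    have h1 := cost_mul ih (cost_block k (d k))
    refine cost_congr h1 ?_ ?_
    · rw [WTd_succ]; group
    · simp

-- ## Polynomial lemmas
open Polynomial

theorem comp_decomp (h : Polynomial ℤ) :
    h.comp (X + 1) = (X + 1) * (h.divX.comp (X + 1)) + C (h.coeff 0) := by
  conv_lhs => rw [← X_mul_divX_add h]
  rw [add_comp, mul_comp, X_comp, C_comp]

theorem natDegree_divX_le' {h : Polynomial ℤ} {n : ℕ} (hd : h.natDegree ≤ n + 1) :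
    h.divX.natDegree ≤ n := by
  rw [natDegree_le_iff_coeff_eq_zero] at hd ⊢
  intro N hN
  rw [coeff_divX]
  exact hd (N + 1) (by omega)

theorem natDegree_comp_X_add_one {h : Polynomial ℤ} {n : ℕ} (hd : h.natDegree ≤ n) :
    (h.comp (X + 1)).natDegree ≤ n := by
  refine le_trans natDegree_comp_le ?_
  have : (X + 1 : Polynomial ℤ).natDegree = 1 := by
    simpa using natDegree_X_add_C (1 : ℤ)
  rw [this, mul_one]
  exact hd

theorem coeff_X_add_one_mul (g : Polynomial ℤ) (j : ℕ) :
    ((X + 1) * g).coeff j = g.coeff j + (if j = 0 then 0 else g.coeff (j - 1)) := by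
  rw [add_mul, one_mul, coeff_add]
  rcases j with _ | k
  · simp [mul_coeff_zero]
  · simp [coeff_X_mul, add_comm]

/-- Lemma A: coefficient ℓ¹ bound for `h(x+1)`. -/
theorem sum_natAbs_comp_le (c : ℕ) :
    ∀ n (h : Polynomial ℤ), h.natDegree ≤ n → (∀ i, (h.coeff i).natAbs ≤ c) →
      (∑ i ∈ Finset.range (n + 1), ((h.comp (X + 1)).coeff i).natAbs) + c ≤ c * 2 ^ (n + 1) := by
  intro n
  induction n with
  | zero =>
    intro h hd hc
    have hh : h = C (h.coeff 0) := (Polynomial.eq_C_of_natDegree_le_zero hd)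
    rw [hh]
    simp only [C_comp, zero_add, Finset.sum_range_one, coeff_C_zero]
    have := hc 0
    omega
  | succ n ih =>
    intro h hd hc
    set k := h.divX.comp (X + 1) with hk
    have hdk : k.natDegree ≤ n := natDegree_comp_X_add_one (natDegree_divX_le' hd)
    have ihk := ih h.divX (natDegree_divX_le' hd) (fun i => by rw [coeff_divX]; exact hc (i + 1))
    rw [← hk] at ihk
    have hcoeff : ∀ j, ((h.comp (X + 1)).coeff j).natAbs
        ≤ (k.coeff j).natAbs + (if j = 0 then (h.coeff 0).natAbs else (k.coeff (j - 1)).natAbs) := by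
      intro j
      rw [comp_decomp h, coeff_add, coeff_C, coeff_X_add_one_mul]
      rcases j with _ | i
      · simp only [if_pos rfl]
        calc (k.coeff 0 + 0 + h.coeff 0).natAbs ≤ (k.coeff 0 + 0).natAbs + (h.coeff 0).natAbs :=
              Int.natAbs_add_le _ _
          _ = (k.coeff 0).natAbs + (h.coeff 0).natAbs := by rw [add_zero]
      · simp only [Nat.succ_ne_zero, if_false, add_zero, Nat.add_sub_cancel]
        exact Int.natAbs_add_le _ _
    have hsum : (∑ i ∈ Finset.range (n + 2), ((h.comp (X + 1)).coeff i).natAbs)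
        ≤ (∑ i ∈ Finset.range (n + 2), (k.coeff i).natAbs)
          + ((h.coeff 0).natAbs + ∑ i ∈ Finset.range (n + 1), (k.coeff i).natAbs) := by
      calc (∑ i ∈ Finset.range (n + 2), ((h.comp (X + 1)).coeff i).natAbs)
          ≤ ∑ i ∈ Finset.range (n + 2), ((k.coeff i).natAbs
              + (if i = 0 then (h.coeff 0).natAbs else (k.coeff (i - 1)).natAbs)) :=
            Finset.sum_le_sum (fun i _ => hcoeff i)
        _ = (∑ i ∈ Finset.range (n + 2), (k.coeff i).natAbs)
            + ∑ i ∈ Finset.range (n + 2),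
                (if i = 0 then (h.coeff 0).natAbs else (k.coeff (i - 1)).natAbs) := by
            rw [Finset.sum_add_distrib]
        _ = _ := by
            rw [Finset.sum_range_succ' (fun i =>
              (if i = 0 then (h.coeff 0).natAbs else (k.coeff (i - 1)).natAbs)) (n + 1)]
            simp only [Nat.succ_ne_zero, if_false, if_pos rfl, if_true, Nat.add_sub_cancel]
            ring
    have hlast : (∑ i ∈ Finset.range (n + 2), (k.coeff i).natAbs)
        = ∑ i ∈ Finset.range (n + 1), (k.coeff i).natAbs := by
      rw [Finset.sum_range_succ]
      have : k.coeff (n + 1) = 0 := by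
        rw [natDegree_le_iff_coeff_eq_zero] at hdk
        exact hdk (n + 1) (by omega)
      simp [this]
    have hc0 : (h.coeff 0).natAbs ≤ c := hc 0
    have hpow : c * 2 ^ (n + 2) = 2 * (c * 2 ^ (n + 1)) := by ring
    show (∑ i ∈ Finset.range (n + 2), ((h.comp (X + 1)).coeff i).natAbs) + c ≤ c * 2 ^ (n + 2)
    omega

-- arithmetic
theorem nat_sq_le_pow (n : ℕ) : n * (n + 1) ≤ 2 ^ (n + 2) := by
  induction n with
  | zero => simp
  | succ m ih =>
    have h2 : 2 ^ (m + 3) = 2 * 2 ^ (m + 2) := by ring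
    have h1 : m + 1 < 2 ^ (m + 1) := Nat.lt_two_pow_self
    have h3 : 2 ^ (m + 2) = 2 * 2 ^ (m + 1) := by ring
    calc (m + 1) * (m + 1 + 1) = m * (m + 1) + 2 * (m + 1) := by ring
      _ ≤ 2 ^ (m + 2) + 2 * (m + 1) := by omega
      _ ≤ 2 ^ (m + 2) + 2 ^ (m + 2) := by omega
      _ ≤ 2 ^ (m + 3) := by omega

theorem sum_sq_le (m : ℕ) (g : ℕ → ℕ) :
    (∑ i ∈ Finset.range m, (g i) ^ 2) ≤ (∑ i ∈ Finset.range m, g i) ^ 2 := by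
  have h : ∀ i ∈ Finset.range m, (g i) ^ 2 ≤ g i * (∑ j ∈ Finset.range m, g j) := by
    intro i hi
    have : g i ≤ ∑ j ∈ Finset.range m, g j := Finset.single_le_sum (fun j _ => Nat.zero_le _) hi
    nlinarith
  calc (∑ i ∈ Finset.range m, (g i) ^ 2) ≤ ∑ i ∈ Finset.range m, g i * (∑ j ∈ Finset.range m, g j) :=
        Finset.sum_le_sum h
    _ = (∑ i ∈ Finset.range m, g i) ^ 2 := by rw [← Finset.sum_mul]; ring

theorem main_arith (n c S : ℕ) (hc : 1 ≤ c) (hS : S + c ≤ c * 2 ^ (n + 1)) :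
    c ^ 2 * 4 ^ (n + 1) + (n * (n + 1) + 3 * S ^ 2) ≤ c ^ 2 * 4 ^ (n + 2) := by
  set X := 2 ^ (n + 1) with hX
  have h4 : (4 : ℕ) ^ (n + 1) = X * X := by rw [hX, ← Nat.pow_add, show 4 = 2^2 by rfl, ← Nat.pow_mul]; ring_nf
  have h42 : (4 : ℕ) ^ (n + 2) = 4 * (X * X) := by rw [← h4]; ring
  have hn : n * (n + 1) ≤ 2 * X := by
    have := nat_sq_le_pow n
    have h2 : (2:ℕ) ^ (n + 2) = 2 * X := by rw [hX]; ring
    omega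
  have q1 : 3 * S * (S + c) ≤ 3 * S * (c * X) := Nat.mul_le_mul_left _ hS
  have q2 : 3 * c * X * (S + c) ≤ 3 * c * X * (c * X) := Nat.mul_le_mul_left _ hS
  have q3 : X ≤ c * c * X := by nlinarith
  rw [h4, h42]
  nlinarith [q1, q2, q3, hn]

-- ## Main induction
open Polynomial in
theorem main_cost (c : ℕ) (hc1 : 1 ≤ c) :
    ∀ n (f : Polynomial ℤ), f.natDegree ≤ n → (∀ i, (f.coeff i).natAbs ≤ c) →
      Cost (c ^ 2 * 4 ^ (n + 1)) (wordS f n) (wordT (f.comp (X + 1)) n) := by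
  intro n
  induction n with
  | zero =>
    intro f hd _
    refine cost_of_eq ?_ _
    have hf : f = C (f.coeff 0) := eq_C_of_natDegree_le_zero hd
    rw [hf]
    simp [wordS, wordT, C_comp, List.range_succ]
  | succ n ih =>
    intro f hd hcf
    set c₀ := f.coeff 0 with hc₀
    have hdf₁ : f.divX.natDegree ≤ n := natDegree_divX_le' hd
    set g₁ := f.divX.comp (X + 1) with hg₁
    have hdg₁ : g₁.natDegree ≤ n := natDegree_comp_X_add_one hdf₁
    have hcf₁ : ∀ i, (f.divX.coeff i).natAbs ≤ c := fun i => by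
      rw [coeff_divX]; exact hcf (i + 1)
    have IH := ih f.divX hdf₁ hcf₁
    -- decompose wordS f (n+1)
    have hWS : wordS f (n + 1) = a ^ c₀ * (s⁻¹ * wordS f.divX n * s) := by
      rw [wordS_eq, WSd_head, wordS_eq f.divX n]
      rw [WSd_congr (n + 1) (fun j _ => (coeff_divX (p := f) (n := j)).symm)]
    -- step 1
    have step1 : Cost (0 + (0 + c ^ 2 * 4 ^ (n + 1) + 0)) (wordS f (n + 1))
        (a ^ c₀ * (s⁻¹ * wordT g₁ n * s)) :=
      cost_congr (cost_mul (cost_refl (a ^ c₀) 0)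
        (cost_mul (cost_mul (cost_refl s⁻¹ 0) IH) (cost_refl s 0))) hWS.symm rfl
    -- interleave free identity
    have hP : ((List.range (n + 1)).map
          (fun i => Blk i (g₁.coeff i) * Blk (i + 1) (g₁.coeff i))).prod
        = WTd ((X + 1) * g₁).coeff (n + 1 + 1) := by
      rw [interleave]
      have hcongr := WTd_congr (d := fun j => g₁.coeff j + if j = 0 then 0 else g₁.coeff (j - 1))
        (d' := ((X + 1) * g₁).coeff) (n + 1) (fun j _ => (coeff_X_add_one_mul g₁ j).symm)
      rw [hcongr]
      have hcoeff : ((X + 1) * g₁).coeff (n + 1) = g₁.coeff n := by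
        rw [coeff_X_add_one_mul]
        have h0 : g₁.coeff (n + 1) = 0 := by
          rw [natDegree_le_iff_coeff_eq_zero] at hdg₁
          exact hdg₁ (n + 1) (by omega)
        simp [h0]
      have hite : (if n + 1 = 0 then (0:ℤ) else g₁.coeff (n + 1 - 1))
          = ((X + 1) * g₁).coeff (n + 1) := by simp [hcoeff]
      rw [hite]
      exact (WTd_succ _ (n + 1)).symm
    -- step 2
    have step2 : Cost (0 + ∑ i ∈ Finset.range (n + 1), (2 * i + 3 * (g₁.coeff i).natAbs ^ 2))
        (a ^ c₀ * (s⁻¹ * wordT g₁ n * s)) (a ^ c₀ * WTd ((X + 1) * g₁).coeff (n + 1 + 1)) := by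
      refine cost_mul (cost_refl (a ^ c₀) 0) (cost_congr (cost_sconj g₁.coeff (n + 1)) ?_ hP)
      rw [wordT_eq]
    -- final free identity
    have hfinal : a ^ c₀ * WTd ((X + 1) * g₁).coeff (n + 1 + 1)
        = wordT (f.comp (X + 1)) (n + 1) := by
      rw [a_mul_WTd, wordT_eq]
      refine (WTd_congr (n + 1 + 1) (fun j _ => ?_)).symm
      rw [comp_decomp f, coeff_add, coeff_C, ← hg₁, ← hc₀]
      rcases j with _ | i
      · simp [add_comm]
      · simp
    have chain := cost_congr (cost_trans step1 step2) rfl hfinal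
    -- arithmetic
    refine cost_mono ?_ chain
    have hsplit : (∑ i ∈ Finset.range (n + 1), (2 * i + 3 * (g₁.coeff i).natAbs ^ 2))
        ≤ n * (n + 1) + 3 * (∑ i ∈ Finset.range (n + 1), (g₁.coeff i).natAbs) ^ 2 := by
      rw [Finset.sum_add_distrib]
      have h1 : ∀ m : ℕ, (∑ i ∈ Finset.range (m + 1), 2 * i) = m * (m + 1) := by
        intro m
        induction m with
        | zero => simp
        | succ k ih2 => rw [Finset.sum_range_succ, ih2]; ring
      have h1 := h1 n
      have h2 : (∑ i ∈ Finset.range (n + 1), 3 * (g₁.coeff i).natAbs ^ 2)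
          ≤ 3 * (∑ i ∈ Finset.range (n + 1), (g₁.coeff i).natAbs) ^ 2 := by
        rw [← Finset.mul_sum]
        exact Nat.mul_le_mul_left 3 (sum_sq_le (n + 1) _)
      omega
    have hS := sum_natAbs_comp_le c n f.divX hdf₁ hcf₁
    rw [← hg₁] at hS
    have harith := main_arith n c (∑ i ∈ Finset.range (n + 1), (g₁.coeff i).natAbs) hc1 hS
    have hpow : c ^ 2 * 4 ^ (n + 2) = c ^ 2 * 4 ^ (n + 1 + 1) := rfl
    omega

-- ## Endgame
theorem cost_mem_closure {k : ℕ} {w : F} (h : Cost k w 1) :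
    w ∈ Subgroup.normalClosure RΓ := by
  obtain ⟨l, -, hPr, hprod⟩ := h
  rw [inv_one, mul_one] at hprod
  rw [hprod]
  refine Subgroup.list_prod_mem _ (fun x hx => ?_)
  obtain ⟨u, r, ε, hr, -, rfl⟩ := hPr x hx
  have h1 : r ∈ Subgroup.normalClosure RΓ := Subgroup.subset_normalClosure hr
  exact (Subgroup.normalClosure_normal).conj_mem _ (Subgroup.zpow_mem _ h1 ε) u

theorem cost_area_le {k : ℕ} {w : F} (h : Cost k w 1) : area RΓ w ≤ k := by
  obtain ⟨l, hl, hPr, hprod⟩ := h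
  rw [inv_one, mul_one] at hprod
  have hcp : IsConjProd RΓ l.length w := by
    have hchoice : ∀ i : Fin l.length, IsConjRel (l.get i) :=
      fun i => hPr _ (l.get_mem i)
    choose u r ε hr hε hx using hchoice
    refine ⟨u, r, ε, hr, hε, ?_⟩
    rw [hprod]
    congr 1
    have he : (fun i => u i * r i ^ ε i * (u i)⁻¹) = l.get := by
      funext i; exact (hx i).symm
    rw [he, List.ofFn_get]
  exact le_trans (Nat.sInf_le hcp) hl

open Polynomial in
/-- Lemma 3.2: if `f = Σ_{i=0}^n c_i·x^i ∈ ℤ[x]` has all `|c_i| ≤ c`, then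
`[[a]]_s^{f(x)} = [[a]]_t^{f(x+1)}` in Baumslag's group `Γ`, i.e. the word
`[[a]]_s^f · ([[a]]_t^{f(x+1)})⁻¹` lies in the normal closure of the relators, and its
area is at most `c²·4^{n+1}`. -/
theorem x_plus_one_lemma (f : Polynomial ℤ) (n : ℕ) (hdeg : f.natDegree ≤ n)
    (c : ℕ) (hc : ∀ i, |f.coeff i| ≤ (c : ℤ)) :
    wordS f n * (wordT (f.comp (X + 1)) n)⁻¹ ∈ Subgroup.normalClosure RΓ ∧
    area RΓ (wordS f n * (wordT (f.comp (X + 1)) n)⁻¹) ≤ c ^ 2 * 4 ^ (n + 1) := by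
  by_cases hc0 : c = 0
  · subst hc0
    have hf0 : f = 0 := Polynomial.ext fun i => abs_nonpos_iff.mp (by simpa using hc i)
    subst hf0
    have h1 : wordS 0 n = 1 := by
      rw [wordS]
      refine List.prod_eq_one (fun x hx => ?_)
      rw [List.mem_map] at hx
      obtain ⟨i, -, rfl⟩ := hx
      simp
    have h2 : wordT ((0 : Polynomial ℤ).comp (X + 1)) n = 1 := by
      rw [wordT, zero_comp]
      refine List.prod_eq_one (fun x hx => ?_)
      rw [List.mem_map] at hx
      obtain ⟨i, -, rfl⟩ := hx
      simp
    have Hw : Cost 0 (wordS 0 n * (wordT ((0 : Polynomial ℤ).comp (X + 1)) n)⁻¹) 1 :=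
      cost_of_eq (by rw [h1, h2]; group) 0
    exact ⟨cost_mem_closure Hw, le_trans (cost_area_le Hw) (Nat.zero_le _)⟩
  · have hc1 : 1 ≤ c := Nat.one_le_iff_ne_zero.2 hc0
    have hcn : ∀ i, (f.coeff i).natAbs ≤ c := fun i => by
      have h := hc i
      rw [Int.abs_eq_natAbs] at h
      exact_mod_cast h
    have H := main_cost c hc1 n f hdeg hcn
    have Hw : Cost (c ^ 2 * 4 ^ (n + 1))
        (wordS f n * (wordT (f.comp (X + 1)) n)⁻¹) 1 := by
      obtain ⟨l, h1, h2, h3⟩ := H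
      exact ⟨l, h1, h2, by rw [inv_one, mul_one]; exact h3⟩
    exact ⟨cost_mem_closure Hw, cost_area_le Hw⟩
end
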